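/- arXiv:1805.09778 — 7 statements merged into one kernel-verified Lean document; each statement's English description precedes it below -/
import Mathlib

section
/- Let BSP(w,n) be the set of permutations in S_{n+k} satisfying the order constraints of the word w. If σ ∈ BSP(w,n) and i is an n-descent of σ (i.e., σ(i) - σ(i+1) > n), then the permutation s_i∘σ obtained by swapping the values in positions i and i+1 is also in BSP(w,n). -/
open Finset Polynomial

/-- A permutation `σ` of `{0, ..., n+k-1}` satisfies the order constraints of the
word `w ∈ {r,c}^k` (where `true` encodes the letter `c` and `false` encodes `r`):
for each `i < k`, the position of value `i` is before the position of value `n+i`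
when `w i = c`, and after it when `w i = r`. -/
def StripConstraints (n k : ℕ) (w : Fin k → Bool) (σ : Equiv.Perm (Fin (n + k))) : Prop :=
  ∀ i : Fin k,
    (w i = true →
      (σ.symm ⟨i.val, by have := i.isLt; omega⟩).val
        < (σ.symm ⟨n + i.val, by have := i.isLt; omega⟩).val) ∧
    (w i = false →
      (σ.symm ⟨n + i.val, by have := i.isLt; omega⟩).val
        < (σ.symm ⟨i.val, by have := i.isLt; omega⟩).val)

instance {n k : ℕ} (w : Fin k → Bool) (σ : Equiv.Perm (Fin (n + k))) :
    Decidable (StripConstraints n k w σ) :=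
  inferInstanceAs (Decidable (∀ _ : Fin k, _ ∧ _))

/-- `σ` has no `n`-descent: `σ(j) - σ(j+1) ≤ n` for all consecutive positions. -/
def NoNDescent (n : ℕ) {m : ℕ} (σ : Equiv.Perm (Fin m)) : Prop :=
  ∀ j j' : Fin m, j'.val = j.val + 1 → (σ j).val ≤ n + (σ j').val

instance {n m : ℕ} (σ : Equiv.Perm (Fin m)) : Decidable (NoNDescent n σ) :=
  inferInstanceAs (Decidable (∀ _ _ : Fin m, _ → _))

lemma swap_pres {m : ℕ} (σ : Equiv.Perm (Fin m)) (p q : Fin m) (hpq : q.val = p.val + 1)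
    (u v : Fin m) (huv : (σ.symm u).val < (σ.symm v).val)
    (hne : ¬(u = σ p ∧ v = σ q)) :
    (((σ * Equiv.swap p q).symm u).val < ((σ * Equiv.swap p q).symm v).val) := by
  have hsy : ∀ x, (σ * Equiv.swap p q).symm x = Equiv.swap p q (σ.symm x) := by
    intro x
    rfl
  rw [hsy, hsy]
  have hup : σ.symm u = p ↔ u = σ p := by rw [Equiv.symm_apply_eq]
  have huq : σ.symm u = q ↔ u = σ q := by rw [Equiv.symm_apply_eq]
  have hvp : σ.symm v = p ↔ v = σ p := by rw [Equiv.symm_apply_eq]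
  have hvq : σ.symm v = q ↔ v = σ q := by rw [Equiv.symm_apply_eq]
  rw [Equiv.swap_apply_def, Equiv.swap_apply_def]
  by_cases h1 : σ.symm u = p <;> by_cases h2 : σ.symm u = q <;>
    by_cases h3 : σ.symm v = p <;> by_cases h4 : σ.symm v = q <;>
    simp only [h1, h2, h3, h4, if_pos, if_neg, if_true, if_false] <;>
    first
    | omega
    | (exact absurd ⟨hup.mp ‹_›, hvq.mp ‹_›⟩ hne)
    | (simp_all [Fin.ext_iff]; omega)

theorem stmt3 (n k : ℕ) (hn : 1 ≤ n) (hk : 1 ≤ k) (w : Fin k → Bool)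
    (σ : Equiv.Perm (Fin (n + k))) (hσ : StripConstraints n k w σ)
    (i : ℕ) (h : i + 1 < n + k)
    (hdes : n + (σ ⟨i + 1, h⟩).val < (σ ⟨i, by omega⟩).val) :
    StripConstraints n k w (σ * Equiv.swap ⟨i, by omega⟩ ⟨i + 1, h⟩) := by
  intro j
  obtain ⟨hc, hr⟩ := hσ j
  constructor
  · intro hw
    apply swap_pres _ _ _ rfl _ _ (hc hw)
    rintro ⟨h1, h2⟩
    have e1 : (⟨j.val, by have := j.isLt; omega⟩ : Fin (n+k)).val = (σ ⟨i, by omega⟩).val := by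
      rw [h1]
    have e2 : (⟨n + j.val, by have := j.isLt; omega⟩ : Fin (n+k)).val = (σ ⟨i+1, h⟩).val := by
      rw [h2]
    simp at e1 e2
    omega
  · intro hw
    apply swap_pres _ _ _ rfl _ _ (hr hw)
    rintro ⟨h1, h2⟩
    have e1 : (⟨n + j.val, by have := j.isLt; omega⟩ : Fin (n+k)).val = (σ ⟨i, by omega⟩).val := by
      rw [h1]
    have e2 : (⟨j.val, by have := j.isLt; omega⟩ : Fin (n+k)).val = (σ ⟨i+1, h⟩).val := by
      rw [h2]
    simp at e1 e2
    omega
end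

section
/- The number of permutations σ in S_{n+k} such that (1) for each i ∈ [k], σ⁻¹(i) < σ⁻¹(n+i) if w_i = c and σ⁻¹(i) > σ⁻¹(n+i) if w_i = r for some fixed word w, and (2) σ has no n-descent (σ(j) - σ(j+1) ≤ n for all j ∈ [n+k-1]), summed over all words w ∈ {r,c}^k, equals (n+1)^k · n!. -/
open Finset Polynomial

open Finset Equiv

section Aux
variable {m : ℕ}

def ins (p : Fin (m + 1)) (τ : Equiv.Perm (Fin m)) : Equiv.Perm (Fin (m + 1)) :=
  (finSuccEquiv' p).trans (τ.optionCongr.trans (finSuccEquiv' (Fin.last m)).symm)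

lemma ins_apply_self (p : Fin (m + 1)) (τ : Equiv.Perm (Fin m)) :
    ins p τ p = Fin.last m := by
  simp [ins, finSuccEquiv'_at, finSuccEquiv'_symm_none]

lemma ins_apply_succAbove (p : Fin (m + 1)) (τ : Equiv.Perm (Fin m)) (j : Fin m) :
    ins p τ (p.succAbove j) = (τ j).castSucc := by
  simp [ins, finSuccEquiv'_succAbove, finSuccEquiv'_symm_some, Fin.succAbove_last]

lemma succAbove_val (p : Fin (m + 1)) (j : Fin m) :
    (p.succAbove j).val = if j.val < p.val then j.val else j.val + 1 := by
  rcases lt_or_ge (j.val) (p.val) with h | h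
  · rw [Fin.succAbove_of_castSucc_lt _ _ (by simpa [Fin.lt_def] using h), if_pos h,
      Fin.coe_castSucc]
  · rw [Fin.succAbove_of_le_castSucc _ _ (by simpa [Fin.le_def] using h), if_neg (by omega)]
    simp

lemma ins_injective : Function.Injective
    (fun x : Fin (m + 1) × Equiv.Perm (Fin m) => ins x.1 x.2) := by
  rintro ⟨p, τ⟩ ⟨p', τ'⟩ h
  simp only at h
  have hp : p = p' := by
    have h1 : ins p τ p = Fin.last m := ins_apply_self p τ
    have h2 : ins p' τ' p' = Fin.last m := ins_apply_self p' τ'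
    rw [h] at h1
    exact (ins p' τ').injective (h1.trans h2.symm)
  subst hp
  have hτ : τ = τ' := by
    ext j
    have := congrArg (fun e => (e (p.succAbove j) : Fin (m+1))) h
    simp only [ins_apply_succAbove] at this
    exact congrArg Fin.val (Fin.castSucc_injective _ this)
  rw [hτ]
end Aux

lemma noNDescent_ins_iff (n k : ℕ) (p : Fin (n + k + 1)) (τ : Equiv.Perm (Fin (n + k))) :
    NoNDescent n (ins p τ) ↔
      NoNDescent n τ ∧ ∀ b : Fin (n + k), b.val = p.val → k ≤ (τ b).val := by
  constructor
  · intro H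
    constructor
    · intro a b hab
      by_cases hsep : p.val = a.val + 1
      · -- separated by the inserted max
        have hb : k ≤ (τ b).val := by
          have hb' : (p.succAbove b).val = p.val + 1 := by
            rw [succAbove_val]; split <;> omega
          have := H p (p.succAbove b) (by omega)
          rw [ins_apply_self, ins_apply_succAbove] at this
          simp [Fin.last] at this
          omega
        have := (τ a).isLt
        omega
      · have hv : (p.succAbove b).val = (p.succAbove a).val + 1 := by
          rw [succAbove_val, succAbove_val]
          have ha := a.isLt; have hb := b.isLt
          have hpa : a.val ≠ p.val → True := fun _ => trivial
          split <;> split <;> omega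
        have := H (p.succAbove a) (p.succAbove b) hv
        rw [ins_apply_succAbove, ins_apply_succAbove] at this
        simpa using this
    · intro b hb
      have hb' : (p.succAbove b).val = p.val + 1 := by
        rw [succAbove_val]; split <;> omega
      have := H p (p.succAbove b) (by omega)
      rw [ins_apply_self, ins_apply_succAbove] at this
      simp [Fin.last] at this
      omega
  · rintro ⟨Hτ, Hp⟩ i i' hii
    by_cases hi : i = p
    · subst hi
      have hlt : i.val < n + k := by omega
      set b : Fin (n + k) := ⟨i.val, hlt⟩ with hbdef
      have hi' : i' = i.succAbove b := by
        apply Fin.ext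
        rw [succAbove_val]
        have : b.val = i.val := rfl
        split <;> omega
      rw [hi', ins_apply_self, ins_apply_succAbove]
      have := Hp b rfl
      simp [Fin.last]
      omega
    · by_cases hi' : i' = p
      · have := (ins p τ i).isLt
        subst hi'
        rw [ins_apply_self]
        simp [Fin.last]
        omega
      · obtain ⟨a, ha⟩ := Fin.exists_succAbove_eq hi
        obtain ⟨b, hb⟩ := Fin.exists_succAbove_eq hi'
        have hav : i.val = if a.val < p.val then a.val else a.val + 1 := by
          rw [← ha, succAbove_val]
        have hbv : i'.val = if b.val < p.val then b.val else b.val + 1 := by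
          rw [← hb, succAbove_val]
        have hip : i.val ≠ p.val := fun h => hi (Fin.ext h)
        have hi'p : i'.val ≠ p.val := fun h => hi' (Fin.ext h)
        have hba : b.val = a.val + 1 := by
          split at hav <;> split at hbv <;> omega
        have := Hτ a b hba
        rw [← ha, ← hb, ins_apply_succAbove, ins_apply_succAbove]
        simpa using this

lemma sum_range_ite (n k : ℕ) :
    ∑ i ∈ Finset.range (n + k), (if k ≤ i then 1 else 0) = n := by
  induction n with
  | zero =>
    apply Finset.sum_eq_zero
    intro i hi
    rw [if_neg]
    simpa using hi
  | succ n ih =>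
    have : n + 1 + k = (n + k) + 1 := by omega
    rw [this, Finset.sum_range_succ, ih, if_pos (by omega)]

lemma card_noNDescent (n k : ℕ) :
    (Finset.univ.filter (fun σ : Equiv.Perm (Fin (n + k)) => NoNDescent n σ)).card
      = (n + 1) ^ k * n.factorial := by
  induction k with
  | zero =>
    have hall : ∀ σ : Equiv.Perm (Fin (n + 0)), NoNDescent n σ :=
      fun σ j j' _ => by have := (σ j).isLt; omega
    rw [Finset.filter_true_of_mem (fun σ _ => hall σ)]
    simp [Fintype.card_perm]
  | succ k ih =>
    set m := n + k with hm
    have hbij : Function.Bijective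
        (fun x : Fin (m + 1) × Equiv.Perm (Fin m) => ins x.1 x.2) := by
      rw [Fintype.bijective_iff_injective_and_card]
      refine ⟨ins_injective, ?_⟩
      simp [Fintype.card_perm, Nat.factorial_succ]
    have key : Fintype.card {σ : Equiv.Perm (Fin (m + 1)) // NoNDescent n σ}
        = Fintype.card {x : Fin (m + 1) × Equiv.Perm (Fin m) // NoNDescent n (ins x.1 x.2)} :=
      Fintype.card_congr
        (((Equiv.ofBijective _ hbij).subtypeEquiv (fun x => Iff.rfl)).symm)
    have lhs : (Finset.univ.filter
          (fun σ : Equiv.Perm (Fin (n + (k+1))) => NoNDescent n σ)).card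
        = Fintype.card {σ : Equiv.Perm (Fin (m + 1)) // NoNDescent n σ} := by
      rw [Fintype.card_subtype]
      congr
    rw [lhs, key, Fintype.card_subtype]
    have hfc : ∀ x : Fin (m + 1) × Equiv.Perm (Fin m),
        NoNDescent n (ins x.1 x.2) ↔
          (NoNDescent n x.2 ∧ ∀ b : Fin m, b.val = x.1.val → k ≤ (x.2 b).val) :=
      fun x => noNDescent_ins_iff n k x.1 x.2
    calc (Finset.univ.filter
            (fun x : Fin (m + 1) × Equiv.Perm (Fin m) => NoNDescent n (ins x.1 x.2))).card
        = ∑ x : Fin (m + 1) × Equiv.Perm (Fin m),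
            (if NoNDescent n x.2 ∧ ∀ b : Fin m, b.val = x.1.val → k ≤ (x.2 b).val
              then 1 else 0) := by
          rw [Finset.card_filter]
          exact Finset.sum_congr rfl (fun x _ => by
            by_cases h : NoNDescent n (ins x.1 x.2)
            · rw [if_pos h, if_pos ((hfc x).1 h)]
            · rw [if_neg h, if_neg (fun hh => h ((hfc x).2 hh))])
      _ = ∑ p : Fin (m + 1), ∑ τ : Equiv.Perm (Fin m),
            (if NoNDescent n τ ∧ ∀ b : Fin m, b.val = p.val → k ≤ (τ b).val
              then 1 else 0) := by
          rw [Fintype.sum_prod_type]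
      _ = ∑ τ : Equiv.Perm (Fin m), ∑ p : Fin (m + 1),
            (if NoNDescent n τ ∧ ∀ b : Fin m, b.val = p.val → k ≤ (τ b).val
              then 1 else 0) := Finset.sum_comm
      _ = ∑ τ : Equiv.Perm (Fin m), (if NoNDescent n τ then n + 1 else 0) := by
          refine Finset.sum_congr rfl (fun τ _ => ?_)
          by_cases hτ : NoNDescent n τ
          · simp only [hτ, true_and, if_pos]
            rw [Fin.sum_univ_castSucc]
            have hlast : (if (∀ b : Fin m, b.val = (Fin.last m).val → k ≤ (τ b).val)
                then (1:ℕ) else 0) = 1 := by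
              rw [if_pos]
              intro b hb
              exact absurd hb (by have := b.isLt; simp [Fin.last]; omega)
            rw [hlast]
            have hcast : ∀ b : Fin m,
                (if (∀ b' : Fin m, b'.val = (Fin.castSucc b).val → k ≤ (τ b').val)
                  then (1:ℕ) else 0) = if k ≤ (τ b).val then 1 else 0 := by
              intro b
              congr 1
              rw [eq_iff_iff]
              constructor
              · intro h; exact h b rfl
              · intro h b' hb'
                have : b' = b := Fin.ext (by simpa using hb')
                rw [this]; exact h
            rw [Finset.sum_congr rfl (fun b _ => hcast b)]
            rw [Equiv.sum_comp τ (fun v : Fin m => if k ≤ v.val then (1:ℕ) else 0)]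
            rw [Fin.sum_univ_eq_sum_range (fun i => if k ≤ i then (1:ℕ) else 0)]
            rw [sum_range_ite n k]
          · simp [hτ]
      _ = (n + 1) * (Finset.univ.filter
            (fun τ : Equiv.Perm (Fin m) => NoNDescent n τ)).card := by
          rw [Finset.card_filter, Finset.mul_sum]
          exact Finset.sum_congr rfl (fun τ _ => by by_cases h : NoNDescent n τ <;> simp [h])
      _ = (n + 1) ^ (k + 1) * n.factorial := by
          rw [ih, pow_succ]; ring

lemma card_words (n k : ℕ) (hn : 1 ≤ n) (σ : Equiv.Perm (Fin (n + k))) :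
    (Finset.univ.filter (fun w : Fin k → Bool => StripConstraints n k w σ)).card = 1 := by
  rw [Finset.card_eq_one]
  refine ⟨fun i => decide ((σ.symm ⟨i.val, by have := i.isLt; omega⟩).val
      < (σ.symm ⟨n + i.val, by have := i.isLt; omega⟩).val), ?_⟩
  ext w
  simp only [Finset.mem_filter, Finset.mem_univ, true_and, Finset.mem_singleton]
  have hne : ∀ i : Fin k,
      (σ.symm ⟨i.val, by have := i.isLt; omega⟩).val
        ≠ (σ.symm ⟨n + i.val, by have := i.isLt; omega⟩).val := by
    intro i h
    have h2 := σ.symm.injective (Fin.ext h : σ.symm _ = σ.symm _)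
    have := congrArg Fin.val h2
    simp at this
    omega
  constructor
  · intro hw
    funext i
    rcases Bool.eq_false_or_eq_true (w i) with h | h
    · rw [h]
      exact (decide_eq_true ((hw i).1 h)).symm
    · rw [h]
      have := (hw i).2 h
      exact (decide_eq_false (by omega)).symm
  · rintro rfl
    intro i
    refine ⟨fun h => ?_, fun h => ?_⟩
    · exact decide_eq_true_iff.mp h
    · have := decide_eq_false_iff_not.mp h
      have := hne i
      omega

theorem stmt4 (n k : ℕ) (hn : 1 ≤ n) (hk : 1 ≤ k) :
    ∑ w : Fin k → Bool,
      Nat.card {σ : Equiv.Perm (Fin (n + k)) //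
        StripConstraints n k w σ ∧ NoNDescent n σ}
      = (n + 1) ^ k * n.factorial := by
  have step : ∀ w : Fin k → Bool,
      Nat.card {σ : Equiv.Perm (Fin (n + k)) // StripConstraints n k w σ ∧ NoNDescent n σ}
        = (Finset.univ.filter
            (fun σ : Equiv.Perm (Fin (n + k)) =>
              StripConstraints n k w σ ∧ NoNDescent n σ)).card := by
    intro w
    rw [Nat.card_eq_fintype_card, Fintype.card_subtype]
  calc ∑ w : Fin k → Bool,
        Nat.card {σ : Equiv.Perm (Fin (n + k)) //
          StripConstraints n k w σ ∧ NoNDescent n σ}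
      = ∑ w : Fin k → Bool, ∑ σ : Equiv.Perm (Fin (n + k)),
          (if StripConstraints n k w σ ∧ NoNDescent n σ then 1 else 0) := by
        exact Finset.sum_congr rfl (fun w _ => by rw [step w, Finset.card_filter])
    _ = ∑ σ : Equiv.Perm (Fin (n + k)), ∑ w : Fin k → Bool,
          (if StripConstraints n k w σ ∧ NoNDescent n σ then 1 else 0) := Finset.sum_comm
    _ = ∑ σ : Equiv.Perm (Fin (n + k)), (if NoNDescent n σ then 1 else 0) := by
        refine Finset.sum_congr rfl (fun σ _ => ?_)
        by_cases hσ : NoNDescent n σ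
        · simp only [hσ, and_true, if_pos]
          rw [← Finset.card_filter]
          exact card_words n k hn σ
        · simp [hσ]
    _ = (Finset.univ.filter (fun σ : Equiv.Perm (Fin (n + k)) => NoNDescent n σ)).card := by
        rw [Finset.card_filter]
    _ = (n + 1) ^ k * n.factorial := card_noNDescent n k
end

section
/- For word w = c (a single letter c), the generating function over permutations σ ∈ S_{n+1} satisfying σ⁻¹(1) < σ⁻¹(n+1) (no n-descent condition is automatic) of q^{inv_n(σ)} equals [n-1]_q! · ∑_{i=1}^{n} i·q^{i-1}, where inv_n(σ) = #{(i,j) : 0 < j-i < n and σ⁻¹(i) > σ⁻¹(j)}. -/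
open Finset Polynomial

/-- `inv_n(σ) = #{(i,j) : 0 < j - i < n and σ⁻¹(i) > σ⁻¹(j)}` (on values). -/
def InvN (n : ℕ) {m : ℕ} (σ : Equiv.Perm (Fin m)) : ℕ :=
  (Finset.univ.filter fun p : Fin m × Fin m =>
    p.1.val < p.2.val ∧ p.2.val < p.1.val + n ∧ (σ.symm p.2).val < (σ.symm p.1).val).card

/-- The `q`-integer `[m]_q = 1 + q + ... + q^{m-1}` as a polynomial in `q = X`. -/
noncomputable def qInt (m : ℕ) : Polynomial ℤ := ∑ i ∈ Finset.range m, Polynomial.X ^ i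

/-- The `q`-factorial `[n]_q! = [1]_q [2]_q ⋯ [n]_q`. -/
noncomputable def qFact (n : ℕ) : Polynomial ℤ := ∏ m ∈ Finset.range n, qInt (m + 1)

/-!
Inverting `σ`, the sum runs over permutations `τ = σ⁻¹` with `τ 0 < τ n`, and `InvN n σ` is then
the ordinary inversion number of `τ`: the only pair `InvN` leaves out is `(0, n)`, which is not
inverted. Building `τ` by first choosing `p = τ n` and then `a = τ 0`, the inversion number
splits as `(n - p) + a + inv ρ` with `ρ ∈ S_{n-1}` free, where `a < p` is exactly the constraint.
Summing over `ρ` gives `[n-1]_q!`, and `∑_{a < p ≤ n} q^(n - p + a) = ∑_{k < n} (k + 1) q^k`.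
-/

namespace Equiv.Perm

variable {m : ℕ}

def invCount (τ : Perm (Fin m)) : ℕ :=
  #{ij : Fin m × Fin m | ij.1 < ij.2 ∧ τ ij.2 < τ ij.1}

noncomputable def insertNth (i p : Fin (m + 1)) (π : Perm (Fin m)) : Perm (Fin (m + 1)) :=
  .ofBijective (i.insertNth p (p.succAbove ∘ π)) <| by
    refine (Fintype.bijective_iff_injective_and_card _).2 ⟨fun a b hab => ?_, rfl⟩
    induction a using i.succAboveCases <;> induction b using i.succAboveCases <;> simp_all

@[simp]
theorem insertNth_apply_same (i p : Fin (m + 1)) (π : Perm (Fin m)) : insertNth i p π i = p := by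
  simp [insertNth]

@[simp]
theorem insertNth_apply_succAbove (i p : Fin (m + 1)) (π : Perm (Fin m)) (j : Fin m) :
    insertNth i p π (i.succAbove j) = p.succAbove (π j) := by
  simp [insertNth]

theorem insertNth_bijective (i : Fin (m + 1)) :
    Function.Bijective fun x : Fin (m + 1) × Perm (Fin m) => insertNth i x.1 x.2 := by
  refine (Fintype.bijective_iff_injective_and_card _).2 ⟨?_, ?_⟩
  · rintro ⟨p, π⟩ ⟨p', π'⟩ h
    have hp : p = p' := by simpa using DFunLike.congr_fun h i
    subst hp
    have hπ : π = π' := Equiv.ext fun j => by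
      simpa using DFunLike.congr_fun h (i.succAbove j)
    rw [hπ]
  · simp [Fintype.card_perm, Nat.factorial_succ]

theorem sum_eq_sum_insertNth {M : Type*} [AddCommMonoid M] (i : Fin (m + 1))
    (g : Perm (Fin (m + 1)) → M) :
    ∑ τ, g τ = ∑ p, ∑ π : Perm (Fin m), g (insertNth i p π) := by
  rw [← Fintype.sum_prod_type']
  exact (Fintype.sum_bijective _ (insertNth_bijective i) _ _ fun _ => rfl).symm

theorem invCount_insertNth (i p : Fin (m + 1)) (π : Perm (Fin m)) :
    invCount (insertNth i p π) = invCount π + #{j | i ≤ j.castSucc ∧ (π j).castSucc < p}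
      + #{j | j.castSucc < i ∧ p ≤ (π j).castSucc} := by
  simp only [invCount, card_filter, Fintype.sum_prod_type]
  rw [Fin.sum_univ_succAbove _ i]
  simp only [Fin.sum_univ_succAbove _ i, insertNth_apply_same, insertNth_apply_succAbove,
    lt_irrefl, false_and, if_false, zero_add, Fin.lt_succAbove_iff_le_castSucc,
    Fin.succAbove_lt_iff_castSucc_lt, Fin.succAbove_lt_succAbove_iff, sum_add_distrib]
  ring

theorem card_filter_castSucc_lt (π : Perm (Fin m)) (p : Fin (m + 1)) :
    #{j | (π j).castSucc < p} = p := by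
  rw [card_equiv π (t := {x : Fin m | (x : ℕ) < p}) fun j => by simp [Fin.lt_def],
    Fin.card_filter_val_lt]
  exact min_eq_right p.is_le

theorem card_filter_le_castSucc (π : Perm (Fin m)) (p : Fin (m + 1)) :
    #{j | p ≤ (π j).castSucc} = m - p := by
  have h := card_filter_add_card_filter_not (s := univ) fun j => (π j).castSucc < p
  simp only [card_filter_castSucc_lt, not_lt, card_univ, Fintype.card_fin] at h
  omega

theorem invCount_insertNth_zero (p : Fin (m + 1)) (π : Perm (Fin m)) :
    invCount (insertNth 0 p π) = p + invCount π := by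
  simp [invCount_insertNth, card_filter_castSucc_lt, add_comm]

theorem invCount_insertNth_last (p : Fin (m + 1)) (π : Perm (Fin m)) :
    invCount (insertNth (Fin.last m) p π) = (m - p) + invCount π := by
  simp [invCount_insertNth, card_filter_le_castSucc, add_comm]

theorem sum_mul_pow_invCount {R : Type*} [CommSemiring R] (q : R) (f : Fin (m + 1) → R) :
    ∑ π : Perm (Fin (m + 1)), f (π 0) * q ^ invCount π
      = (∑ a, f a * q ^ (a : ℕ)) * ∑ ρ : Perm (Fin m), q ^ invCount ρ := by
  rw [sum_eq_sum_insertNth 0, sum_mul_sum]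
  simp [invCount_insertNth_zero, pow_add, mul_assoc]

theorem sum_X_pow_invCount (m : ℕ) : ∑ τ : Perm (Fin m), (X : ℤ[X]) ^ invCount τ = qFact m := by
  induction m with
  | zero => simp [invCount, qFact]
  | succ m ih =>
    have h := sum_mul_pow_invCount (X : ℤ[X]) (m := m) fun _ => 1
    simp only [one_mul] at h
    rw [h, ih, qFact, qFact, prod_range_succ, mul_comm, qInt, Fin.sum_univ_eq_sum_range]

end Equiv.Perm

theorem sum_ite_castSucc_lt_mul_X_pow {m : ℕ} (p : Fin (m + 1)) :
    ∑ a : Fin m, (if a.castSucc < p then 1 else 0) * (X : ℤ[X]) ^ (a : ℕ) = qInt p := by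
  simp only [Fin.lt_def, Fin.val_castSucc, ite_mul, one_mul, zero_mul]
  rw [Fin.sum_univ_eq_sum_range (fun k => if k < p then (X : ℤ[X]) ^ k else 0), ← sum_filter,
    qInt]
  congr 1
  ext k
  simp only [mem_filter, mem_range]
  omega

theorem sum_X_pow_sub_mul_qInt (n : ℕ) :
    ∑ p : Fin (n + 1), (X : ℤ[X]) ^ (n - p) * qInt p = ∑ k ∈ range n, ((k : ℤ[X]) + 1) * X ^ k := by
  rw [Fin.sum_univ_eq_sum_range (fun p => (X : ℤ[X]) ^ (n - p) * qInt p),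
    ← Nat.sum_antidiagonal_eq_sum_range_succ (fun i j => (X : ℤ[X]) ^ j * qInt i)]
  induction n with
  | zero => simp [qInt]
  | succ n ih =>
    rw [Nat.sum_antidiagonal_succ']
    simp only [pow_succ', mul_assoc, ← mul_sum, ih, pow_zero, one_mul]
    rw [qInt, sum_range_succ' (fun k => ((k : ℤ[X]) + 1) * X ^ k), sum_range_succ', mul_sum,
      add_right_comm, ← sum_add_distrib]
    congr 1
    · exact sum_congr rfl fun k _ => by push_cast; ring
    · simp

open Equiv Perm

theorem sum_filter_apply_zero_lt_apply_last_X_pow_invCount (m : ℕ) :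
    ∑ τ ∈ univ.filter (fun τ : Perm (Fin (m + 1)) => τ 0 < τ (Fin.last m)),
      (X : ℤ[X]) ^ invCount τ
      = qFact (m - 1) * ∑ k ∈ range m, ((k : ℤ[X]) + 1) * X ^ k := by
  cases m with
  | zero => simp
  | succ m =>
    have hτ : ∀ p π, (if insertNth (Fin.last (m + 1)) p π 0 < insertNth (Fin.last (m + 1)) p π
          (Fin.last (m + 1)) then (X : ℤ[X]) ^ invCount (insertNth (Fin.last (m + 1)) p π) else 0)
        = X ^ (m + 1 - p) * ((if (π 0).castSucc < p then 1 else 0) * X ^ invCount π) := by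
      intro p π
      have h0 : (0 : Fin (m + 2)) = (Fin.last (m + 1)).succAbove 0 := rfl
      simp only [h0, insertNth_apply_succAbove, insertNth_apply_same,
        Fin.succAbove_lt_iff_castSucc_lt, invCount_insertNth_last]
      split_ifs <;> simp [pow_add]
    rw [sum_filter, sum_eq_sum_insertNth (Fin.last (m + 1))]
    have hπ : ∀ p : Fin (m + 2), ∑ π : Perm (Fin (m + 1)),
        (if (π 0).castSucc < p then 1 else 0) * (X : ℤ[X]) ^ invCount π = qInt p * qFact m := by
      intro p
      rw [sum_mul_pow_invCount X fun a => if a.castSucc < p then 1 else 0,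
        sum_ite_castSucc_lt_mul_X_pow, sum_X_pow_invCount]
    simp only [hτ, ← mul_sum, hπ]
    simp only [← mul_assoc, ← sum_mul, sum_X_pow_sub_mul_qInt]
    rw [mul_comm, Nat.add_sub_cancel]

theorem stripConstraints_single_c_iff {n : ℕ} (σ : Perm (Fin (n + 1))) :
    StripConstraints n 1 (fun _ => true) σ ↔ σ.symm 0 < σ.symm (Fin.last n) := by
  simp only [StripConstraints, Fin.forall_fin_one, forall_const, Bool.true_eq_false,
    IsEmpty.forall_iff, and_true]
  rfl

theorem invN_eq_invCount_symm {n : ℕ} {σ : Perm (Fin (n + 1))}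
    (h : σ.symm 0 < σ.symm (Fin.last n)) : InvN n σ = invCount σ.symm := by
  unfold InvN invCount
  congr 1
  ext ⟨a, b⟩
  simp only [mem_filter, mem_univ, true_and, Fin.lt_def]
  refine ⟨fun ⟨hab, _, hσ⟩ => ⟨hab, hσ⟩, fun ⟨hab, hσ⟩ => ⟨hab, ?_, hσ⟩⟩
  by_contra hb
  obtain rfl : a = 0 := Fin.ext (by rw [Fin.val_zero]; omega)
  obtain rfl : b = Fin.last n := Fin.ext (by rw [Fin.val_last]; omega)
  exact lt_asymm h hσ

theorem stmt8_general (n : ℕ) :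
    ∑ σ ∈ Finset.univ.filter
        (fun σ : Equiv.Perm (Fin (n + 1)) => StripConstraints n 1 (fun _ => true) σ),
      Polynomial.X ^ InvN n σ
      = qFact (n - 1) * ∑ i ∈ Finset.range n, ((i : Polynomial ℤ) + 1) * Polynomial.X ^ i := by
  rw [← sum_filter_apply_zero_lt_apply_last_X_pow_invCount]
  refine sum_nbij' (·.symm) (·.symm) ?_ ?_ (by simp) (by simp) fun σ hσ => ?_
  · simp [stripConstraints_single_c_iff]
  · simp [stripConstraints_single_c_iff]
  · rw [invN_eq_invCount_symm ((stripConstraints_single_c_iff σ).1 (mem_filter.1 hσ).2)]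

theorem stmt8 (n : ℕ) (hn : 2 ≤ n) :
    ∑ σ ∈ Finset.univ.filter
        (fun σ : Equiv.Perm (Fin (n + 1)) => StripConstraints n 1 (fun _ => true) σ),
      Polynomial.X ^ InvN n σ
      = qFact (n - 1) * ∑ i ∈ Finset.range n, ((i : Polynomial ℤ) + 1) * Polynomial.X ^ i :=
  stmt8_general n
end

section
/- For n ≥ 2, the number of permutations σ ∈ S_{n+2} satisfying σ⁻¹(1) > σ⁻¹(n+1), σ⁻¹(2) < σ⁻¹(n+2), and σ(j) - σ(j+1) ≤ n for all j ∈ [n+1], equals (n+1)!·(3n+2)/12. -/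
open Finset Polynomial

/-!
Write `τ = σ⁻¹`, so that `τ v` is the position of the value `v`. With `N = n + 2` values
`0, …, n + 1`, the only pair of values differing by more than `n` is `(n + 1, 0)`, so the
conditions say that the positions `g = (τ (n+1), τ 0, τ 1, τ n)` satisfy `g 2 < g 0`,
`g 3 < g 1` and `g 1 ≠ g 0 + 1`. The number of permutations inducing a given embedding
`g : Fin 4 ↪ Fin N` does not depend on `g`, so everything reduces to counting embeddings.
Swapping coordinates shows that a quarter of all `N (N-1) (N-2) (N-3)` embeddings satisfy the
two inequalities; those that moreover have `g 1 = g 0 + 1` are counted by summing over `g 0`,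
which gives `(N-1) (N-2) (N-3) / 3`. The count is therefore `(n+2)!/4 - (n+1)!/3`.
-/

theorem injective_vecFour {α : Type*} {a b c d : α} (hab : a ≠ b) (hac : a ≠ c) (had : a ≠ d)
    (hbc : b ≠ c) (hbd : b ≠ d) (hcd : c ≠ d) : Function.Injective ![a, b, c, d] := by
  simp only [Matrix.vecCons, Fin.cons_injective_iff]
  simp [hab, hac, had, hbc, hbd, hcd, Function.Injective, eq_iff_true_of_subsingleton]

section PermSMulEmbedding

variable {ι α : Type*} [Fintype ι] [Fintype α] [DecidableEq α]

theorem card_filter_smul_eq (v g : ι ↪ α) :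
    #{τ : Equiv.Perm α | τ • v = g} = #{τ : Equiv.Perm α | τ • v = v} := by
  obtain ⟨τ₀, rfl⟩ := Equiv.Perm.exists_smul_eq_embedding v g
  refine card_nbij' (τ₀⁻¹ * ·) (τ₀ * ·) ?_ ?_ ?_ ?_ <;> intro τ hτ <;>
    simp_all [mul_smul]

theorem card_filter_smul_eq_self (v : ι ↪ α) :
    #{τ : Equiv.Perm α | τ • v = v} = (Fintype.card α - Fintype.card ι).factorial := by
  have hle := Fintype.card_le_of_embedding v
  have hsum : Fintype.card (Equiv.Perm α)
      = Fintype.card (ι ↪ α) * #{τ : Equiv.Perm α | τ • v = v} := by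
    rw [← card_univ, card_eq_sum_card_fiberwise (f := (· • v)) (t := univ) (by simp)]
    simp [card_filter_smul_eq v, card_univ]
  rw [Fintype.card_perm, Fintype.card_embedding_eq, ← Nat.factorial_mul_descFactorial hle,
    mul_comm] at hsum
  exact (Nat.eq_of_mul_eq_mul_left (Nat.descFactorial_pos.mpr hle) hsum).symm

theorem card_filter_perm_smul (v : ι ↪ α) (P : (ι ↪ α) → Prop) [DecidablePred P] :
    #{τ : Equiv.Perm α | P (τ • v)}
      = #{g : ι ↪ α | P g} * (Fintype.card α - Fintype.card ι).factorial := by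
  rw [card_eq_sum_card_fiberwise (f := (· • v)) (t := {g : ι ↪ α | P g}) (by intro τ; simp),
    ← card_filter_smul_eq_self v, ← smul_eq_mul, ← sum_const]
  refine sum_congr rfl fun g hg => ?_
  rw [← card_filter_smul_eq v g, filter_filter]
  congr 1
  ext τ
  simp only [mem_filter, mem_univ, true_and, and_iff_right_iff_imp]
  rintro rfl
  simpa using hg

end PermSMulEmbedding

section Swap

variable {ι β : Type*} [Fintype ι] [DecidableEq ι] [Fintype β] [LinearOrder β]

theorem two_mul_card_filter_and_lt {i j : ι} (hij : i ≠ j) (Q : (ι ↪ β) → Prop)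
    [DecidablePred Q] (hQ : ∀ g, Q ((Equiv.swap i j).toEmbedding.trans g) ↔ Q g) :
    2 * #{g : ι ↪ β | Q g ∧ g i < g j} = #{g : ι ↪ β | Q g} := by
  have hswap : #{g : ι ↪ β | Q g ∧ g j < g i} = #{g : ι ↪ β | Q g ∧ g i < g j} := by
    refine card_nbij' ((Equiv.swap i j).toEmbedding.trans ·)
      ((Equiv.swap i j).toEmbedding.trans ·) ?_ ?_ ?_ ?_ <;> intro g hg
    · simp_all
    · simp_all
    · ext; simp
    · ext; simp
  have hne : ∀ g : ι ↪ β, g i ≠ g j := fun g h => hij (g.injective h)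
  rw [two_mul, ← card_filter_add_card_filter_not (s := {g : ι ↪ β | Q g}) (fun g => g i < g j)]
  simp only [filter_filter, ← hswap]
  congr 2
  ext g
  simp [lt_iff_le_and_ne, hne, eq_comm]

theorem four_mul_card_filter_lt_and_lt {a b c d : ι} (hac : a ≠ c) (hbd : b ≠ d)
    (hab : a ≠ b) (had : a ≠ d) (hcb : c ≠ b) (hcd : c ≠ d) :
    4 * #{g : ι ↪ β | g c < g a ∧ g d < g b} = Fintype.card (ι ↪ β) := by
  have h₁ := two_mul_card_filter_and_lt hac.symm (fun _ : ι ↪ β => True) (fun _ => Iff.rfl)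
  have h₂ := two_mul_card_filter_and_lt hbd.symm (fun g : ι ↪ β => g c < g a) fun g => by
    simp [Equiv.swap_apply_of_ne_of_ne hcd hcb, Equiv.swap_apply_of_ne_of_ne had hab]
  simp only [true_and, filter_true, card_univ] at h₁ h₂
  omega

end Swap

theorem three_mul_sum_descFactorial_two (M : ℕ) :
    3 * ∑ p ∈ range M, p.descFactorial 2 = M.descFactorial 3 := by
  induction M with
  | zero => rfl
  | succ M ih =>
    rw [sum_range_succ, mul_add, ih]
    rcases M with _ | _ | M
    · rfl
    · rfl
    · simp only [Nat.succ_descFactorial_succ, Nat.descFactorial_zero, Nat.descFactorial_one]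
      ring

theorem card_filter_adjacent_eq_castSucc {M : ℕ} (q : Fin M) :
    #{g : Fin 4 ↪ Fin (M + 1) |
        ((g 1 : ℕ) = g 0 + 1 ∧ g 2 < g 0 ∧ g 3 < g 0) ∧ g 0 = q.castSucc}
      = (q : ℕ).descFactorial 2 := by
  have hq : q.castSucc < q.succ := Fin.castSucc_lt_succ
  have hoff : #(Iio q.castSucc).offDiag = (q : ℕ).descFactorial 2 := by
    rw [offDiag_card, Fin.card_Iio, Fin.val_castSucc, Nat.descFactorial_succ,
      Nat.descFactorial_one, Nat.sub_one_mul]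
  rw [← hoff]
  refine card_bij' (fun g _ => (g 2, g 3))
    (fun bc hbc => ⟨![q.castSucc, q.succ, bc.1, bc.2], ?_⟩) ?_ ?_ ?_ ?_
  · obtain ⟨hb, hc, hbc⟩ : bc.1 < q.castSucc ∧ bc.2 < q.castSucc ∧ bc.1 ≠ bc.2 := by
      simpa using hbc
    exact injective_vecFour hq.ne hb.ne' hc.ne' (hb.trans hq).ne' (hc.trans hq).ne' hbc
  · intro g hg
    simp only [mem_filter, mem_univ, true_and, mem_offDiag, mem_Iio] at hg ⊢
    obtain ⟨⟨-, h2, h3⟩, h0⟩ := hg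
    exact ⟨h0 ▸ h2, h0 ▸ h3, fun h => absurd (g.injective h) (by decide)⟩
  · intro bc hbc
    simp only [mem_filter, mem_univ, true_and, mem_offDiag, mem_Iio] at hbc ⊢
    simp [hbc]
  · intro g hg
    simp only [mem_filter, mem_univ, true_and] at hg
    obtain ⟨⟨h1, -, -⟩, h0⟩ := hg
    ext i
    fin_cases i <;> simp [h1, h0]
  · intro bc hbc
    rfl

theorem three_mul_card_filter_adjacent (M : ℕ) :
    3 * #{g : Fin 4 ↪ Fin (M + 1) | (g 1 : ℕ) = g 0 + 1 ∧ g 2 < g 0 ∧ g 3 < g 0}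
      = M.descFactorial 3 := by
  have hlast : #{g : Fin 4 ↪ Fin (M + 1) |
      ((g 1 : ℕ) = g 0 + 1 ∧ g 2 < g 0 ∧ g 3 < g 0) ∧ g 0 = Fin.last M} = 0 := by
    rw [card_eq_zero, filter_eq_empty_iff]
    rintro g - ⟨⟨h1, -⟩, h0⟩
    have := (g 1).isLt
    simp [h0] at h1
    omega
  rw [card_eq_sum_card_fiberwise (f := fun g => g 0) (t := univ) (by simp),
    Fin.sum_univ_castSucc]
  simp only [filter_filter, hlast, add_zero, card_filter_adjacent_eq_castSucc]
  rw [Fin.sum_univ_eq_sum_range (fun p => p.descFactorial 2), three_mul_sum_descFactorial_two]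

theorem card_filter_crossing_not_adjacent (M : ℕ) :
    12 * #{g : Fin 4 ↪ Fin (M + 1) | g 2 < g 0 ∧ g 3 < g 1 ∧ (g 1 : ℕ) ≠ g 0 + 1}
      + 4 * M.descFactorial 3 = 3 * (M + 1).descFactorial 4 := by
  have hcross := four_mul_card_filter_lt_and_lt (β := Fin (M + 1))
    (a := (0 : Fin 4)) (b := 1) (c := 2) (d := 3) (by decide) (by decide) (by decide)
    (by decide) (by decide) (by decide)
  rw [Fintype.card_embedding_eq, Fintype.card_fin, Fintype.card_fin] at hcross
  have hadj : #{g : Fin 4 ↪ Fin (M + 1) | g 2 < g 0 ∧ g 3 < g 1 ∧ (g 1 : ℕ) = g 0 + 1}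
      = #{g : Fin 4 ↪ Fin (M + 1) | (g 1 : ℕ) = g 0 + 1 ∧ g 2 < g 0 ∧ g 3 < g 0} := by
    congr 1
    ext g
    have h30 : g 3 ≠ g 0 := fun h => absurd (g.injective h) (by decide)
    simp only [mem_filter, mem_univ, true_and, Fin.lt_def, ne_eq, Fin.ext_iff] at h30 ⊢
    omega
  have hsplit := card_filter_add_card_filter_not
    (s := {g : Fin 4 ↪ Fin (M + 1) | g 2 < g 0 ∧ g 3 < g 1}) (fun g => (g 1 : ℕ) = g 0 + 1)
  simp only [filter_filter, and_assoc, hadj, ← ne_eq] at hsplit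
  have := three_mul_card_filter_adjacent M
  omega

theorem stripConstraints_false_true_iff {n : ℕ} (σ : Equiv.Perm (Fin (n + 2))) :
    StripConstraints n 2 ![false, true] σ ↔
      σ.symm ⟨n, by omega⟩ < σ.symm 0 ∧ σ.symm 1 < σ.symm (Fin.last (n + 1)) := by
  simp [StripConstraints, Fin.forall_fin_two, Fin.last]

theorem noNDescent_iff {n : ℕ} (σ : Equiv.Perm (Fin (n + 2))) :
    NoNDescent n σ ↔ (σ.symm 0 : ℕ) ≠ σ.symm (Fin.last (n + 1)) + 1 := by
  constructor
  · intro h hadj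
    simpa using h _ _ hadj
  · intro h j j' hj
    by_contra! hlt
    have := (σ j).isLt
    have h0 : σ j' = 0 := Fin.ext (by rw [Fin.val_zero]; omega)
    have hl : σ j = Fin.last (n + 1) := Fin.ext (by rw [Fin.val_last]; omega)
    exact h (by rw [← h0, ← hl]; simpa using hj)

def stripValues (n : ℕ) (hn : 2 ≤ n) : Fin 4 ↪ Fin (n + 2) :=
  have hne {a b : Fin (n + 2)} (h : (a : ℕ) ≠ b) : a ≠ b := Fin.ne_of_val_ne h
  ⟨![Fin.last (n + 1), 0, 1, ⟨n, by omega⟩],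
    injective_vecFour (hne (by simp)) (hne (by simp; omega)) (hne (by simp))
      (hne (by simp)) (hne (by simp; omega)) (hne (by simp; omega))⟩

theorem nat_card_stripConstraints_noNDescent {n : ℕ} (hn : 2 ≤ n) :
    Nat.card {σ : Equiv.Perm (Fin (n + 2)) //
        StripConstraints n 2 ![false, true] σ ∧ NoNDescent n σ}
      = #{g : Fin 4 ↪ Fin (n + 2) | g 2 < g 0 ∧ g 3 < g 1 ∧ (g 1 : ℕ) ≠ g 0 + 1}
        * (n - 2).factorial := by
  have h := card_filter_perm_smul (stripValues n hn)
    fun g => g 2 < g 0 ∧ g 3 < g 1 ∧ (g 1 : ℕ) ≠ g 0 + 1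
  rw [Fintype.card_fin, Fintype.card_fin, show n + 2 - 4 = n - 2 by omega] at h
  rw [← h, ← Fintype.card_subtype, ← Nat.card_eq_fintype_card]
  refine Nat.card_congr ((Equiv.inv _).subtypeEquiv fun σ => ?_)
  simp [stripConstraints_false_true_iff, noNDescent_iff, stripValues, Equiv.Perm.smul_def,
    Equiv.Perm.inv_def]
  tauto

theorem stmt11 (n : ℕ) (hn : 2 ≤ n) :
    12 * Nat.card {σ : Equiv.Perm (Fin (n + 2)) //
        StripConstraints n 2 ![false, true] σ ∧ NoNDescent n σ}
      = (n + 1).factorial * (3 * n + 2) := by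
  have hpattern := card_filter_crossing_not_adjacent (n + 1)
  have h₄ := Nat.factorial_mul_descFactorial (show 4 ≤ n + 2 by omega)
  have h₃ := Nat.factorial_mul_descFactorial (show 3 ≤ n + 1 by omega)
  rw [show n + 2 - 4 = n - 2 by omega, Nat.factorial_succ (n + 1)] at h₄
  rw [show n + 1 - 3 = n - 2 by omega] at h₃
  have hscaled := congrArg (· * (n - 2).factorial) hpattern
  rw [nat_card_stripConstraints_noNDescent hn]
  linarith
end

section
/- Let w be a word of length k and define f_w(n) = ∑_{τ ∈ BSP(w,k)} falling(n+k - des_k(τ), 2k), where falling(m, j) = m(m-1)···(m-j+1). Then f_w(n) is divisible, as a polynomial in n, by the falling factorial (n+1)·n·(n-1)···(n-k+1). -/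
open Finset Polynomial

/-- The number of `n`-descents of `σ`. -/
def DesK (n : ℕ) {m : ℕ} (σ : Equiv.Perm (Fin m)) : ℕ :=
  (Finset.univ.filter fun j : Fin m =>
    ∃ j' : Fin m, j'.val = j.val + 1 ∧ n + (σ j').val < (σ j).val).card

/-- The top value `σ j` of an `n`-descent lies in `[n + 1, m)`, and distinct descents have
distinct top values. -/
theorem desK_le {n m : ℕ} (σ : Equiv.Perm (Fin m)) : DesK n σ ≤ m - (n + 1) := by
  calc DesK n σ ≤ (Ico (n + 1) m).card := by
        refine card_le_card_of_injOn (fun j => (σ j).val) ?_ fun a _ b _ h =>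
          σ.injective (Fin.val_injective h)
        intro j hj
        obtain ⟨j', -, hdesc⟩ := (mem_filter.mp hj).2
        have := (σ j).isLt
        simp only [coe_Ico, Set.mem_Ico]
        omega
    _ = m - (n + 1) := Nat.card_Ico _ _

theorem prod_range_add_dvd_prod_range {M : Type*} [CommMonoid M] (f : ℕ → M) {e m N : ℕ}
    (h : e + m ≤ N) : ∏ j ∈ range m, f (e + j) ∣ ∏ j ∈ range N, f j := by
  have hIco := prod_Ico_eq_prod_range f e (e + m)
  rw [Nat.add_sub_cancel_left] at hIco
  rw [← hIco]
  exact prod_dvd_prod_of_subset _ _ _ fun j hj => by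
    simp only [mem_Ico, mem_range] at hj ⊢
    omega

theorem prod_range_add_one_sub_dvd {R : Type*} [CommRing R] (x : R) {k d : ℕ} (hd : d < k) :
    ∏ j ∈ range (k + 1), (x + 1 - j) ∣ ∏ j ∈ range (2 * k), (x + k - d - j) := by
  obtain ⟨e, rfl⟩ : ∃ e, k = d + 1 + e := ⟨k - 1 - d, by omega⟩
  convert prod_range_add_dvd_prod_range (fun j : ℕ => x + ↑(d + 1 + e) - d - j) (e := e)
    (m := d + 1 + e + 1) (N := 2 * (d + 1 + e)) (by omega) using 1
  refine prod_congr rfl fun j _ => ?_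
  push_cast
  ring

theorem stmt12 (k : ℕ) (hk : 1 ≤ k) (w : Fin k → Bool) :
    (∏ j ∈ Finset.range (k + 1), (Polynomial.X + 1 - (j : Polynomial ℤ))) ∣
      ∑ τ ∈ Finset.univ.filter
          (fun τ : Equiv.Perm (Fin (k + k)) => StripConstraints k k w τ),
        ∏ j ∈ Finset.range (2 * k),
          (Polynomial.X + (k : Polynomial ℤ) - (DesK k τ : Polynomial ℤ)
            - (j : Polynomial ℤ)) := by
  refine dvd_sum fun τ _ => prod_range_add_one_sub_dvd X ?_
  have := desK_le (n := k) τ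
  omega
end

section
/- The polynomials C(n+1, 2k), C(n+2, 2k), ..., C(n+k, 2k) in the variable n (binomial coefficients viewed as polynomials of degree 2k) are linearly independent over the rationals. -/
open Finset Polynomial

private lemma prod_cast_fact16 (n : ℕ) : ∏ j ∈ Finset.range n, ((n : ℚ) - j) = n.factorial := by
  rw [← Finset.prod_range_reflect]
  have : ∀ j ∈ Finset.range n, ((n:ℚ) - (n - 1 - j : ℕ)) = (j+1 : ℕ) := by
    intro j hj
    simp at hj
    rw [Nat.cast_sub (by omega), Nat.cast_sub (by omega)]
    push_cast; ring
  rw [Finset.prod_congr rfl this, ← Nat.cast_prod, Finset.prod_range_add_one_eq_factorial]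

private lemma eval_zero16 (k : ℕ) (i m : Fin k) (h : i.val < m.val) :
    eval ((2*k - 1 - m.val : ℕ) : ℚ)
      (Polynomial.C (((2 * k).factorial : ℚ))⁻¹ *
        ∏ j ∈ Finset.range (2 * k),
          (Polynomial.X + ((i.val + 1 : ℕ) : Polynomial ℚ) - (j : Polynomial ℚ))) = 0 := by
  have hm := m.isLt
  rw [eval_mul, eval_prod]
  rw [Finset.prod_eq_zero (show (2*k + i.val - m.val) ∈ Finset.range (2*k) by simp; omega)]
  · ring
  · have h1 : ((2*k - 1 - m.val : ℕ) : ℚ) = 2*k - 1 - m.val := by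
      rw [Nat.cast_sub (by omega), Nat.cast_sub (by omega)]; push_cast; ring
    have h2 : ((2*k + i.val - m.val : ℕ) : ℚ) = 2*k + i.val - m.val := by
      rw [Nat.cast_sub (by omega)]; push_cast; ring
    simp [h1, h2]
    ring

private lemma eval_one16 (k : ℕ) (m : Fin k) :
    eval ((2*k - 1 - m.val : ℕ) : ℚ)
      (Polynomial.C (((2 * k).factorial : ℚ))⁻¹ *
        ∏ j ∈ Finset.range (2 * k),
          (Polynomial.X + ((m.val + 1 : ℕ) : Polynomial ℚ) - (j : Polynomial ℚ))) = 1 := by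
  have hm := m.isLt
  rw [eval_mul, eval_prod, eval_C]
  have h1 : ((2*k - 1 - m.val : ℕ) : ℚ) = 2*k - 1 - m.val := by
    rw [Nat.cast_sub (by omega), Nat.cast_sub (by omega)]; push_cast; ring
  have : ∀ j ∈ Finset.range (2*k),
      eval ((2*k - 1 - m.val : ℕ) : ℚ)
        (Polynomial.X + ((m.val + 1 : ℕ) : Polynomial ℚ) - (j : Polynomial ℚ))
      = ((2*k : ℕ) : ℚ) - j := by
    intro j hj
    simp [h1]; push_cast; ring
  rw [Finset.prod_congr rfl this, prod_cast_fact16]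
  rw [inv_mul_cancel₀ (by exact_mod_cast Nat.factorial_ne_zero (2*k))]

theorem stmt16 (k : ℕ) (hk : 1 ≤ k) :
    LinearIndependent ℚ (fun i : Fin k =>
      Polynomial.C (((2 * k).factorial : ℚ))⁻¹ *
        ∏ j ∈ Finset.range (2 * k),
          (Polynomial.X + ((i.val + 1 : ℕ) : Polynomial ℚ) - (j : Polynomial ℚ))) := by
  rw [Fintype.linearIndependent_iff]
  intro g hg
  set p : Fin k → Polynomial ℚ := fun i =>
      Polynomial.C (((2 * k).factorial : ℚ))⁻¹ *
        ∏ j ∈ Finset.range (2 * k),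
          (Polynomial.X + ((i.val + 1 : ℕ) : Polynomial ℚ) - (j : Polynomial ℚ)) with hp
  have eqm : ∀ m : Fin k, ∑ i : Fin k, g i * eval ((2*k - 1 - m.val : ℕ) : ℚ) (p i) = 0 := by
    intro m
    have := congrArg (eval ((2*k - 1 - m.val : ℕ) : ℚ)) hg
    simpa only [eval_finset_sum, Polynomial.eval_smul, smul_eq_mul, Polynomial.eval_zero] using this
  have step : ∀ m : Fin k, (∀ i : Fin k, m.val < i.val → g i = 0) → g m = 0 := by
    intro m hm
    have h := eqm m
    rw [Finset.sum_eq_single m] at h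
    · rw [hp] at h; rw [eval_one16 k m] at h; simpa using h
    · intro i _ hne
      rcases lt_trichotomy i.val m.val with hlt|heq|hgt
      · rw [hp, eval_zero16 k i m hlt]; ring
      · exact absurd (Fin.ext heq) hne
      · rw [hm i hgt]; ring
    · simp
  have final : ∀ d, ∀ m : Fin k, k - m.val ≤ d → g m = 0 := by
    intro d
    induction d with
    | zero => intro m hm; have := m.isLt; omega
    | succ d ih =>
      intro m hm
      exact step m (fun i hi => ih i (by have := i.isLt; omega))
  exact fun m => final k m (by omega)
end

section
/- Fix n ≥ 1 and a partition of {1,...,n} into blocks; suppose the blocks, listed with sizes p_1,...,p_ℓ, arise from forcing, for each block {i_1 < i_2 < ... < i_j}, that in σ ∈ S_{2n} (with σ⁻¹(i) < σ⁻¹(n+i) for all i) the value i_s + n immediately precedes i_{s-1} for all 1 < s ≤ j. Then the number of such σ equals the multinomial coefficient (n+ℓ)!/((p_1+1)!···(p_ℓ+1)!). -/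
open Finset Polynomial

/-!
Read `σ` as the word `σ(0) σ(1) ⋯ σ(2n-1)` in the values `i` ("small") and `n + i` ("big").
When `x` is the predecessor of `y` in its block, `n + y` must be immediately followed by `x`;
gluing these pairs cuts the word into `n + ℓ` units, one headed by each letter that is not glued
behind another one: every `n + y`, and `x` for `x` the largest element of its block.
For a block `i₁ < ⋯ < i_j` the remaining constraints `σ⁻¹(i) < σ⁻¹(n + i)` say exactly that
its `j + 1` units occur in the order `i_j, (n+i_j) i_{j-1}, …, (n+i₂) i₁, n+i₁`.
So admissible words are the arrangements of the units in which every block's chain is increasing.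
Every arrangement is uniquely such a sorted arrangement followed by a permutation of the units
preserving blocks, and there are `∏ (p_k + 1)!` of those.
-/

section FiberwiseStrictMono

variable {κ α β : Type*} [LinearOrder κ] [LinearOrder α]

def FiberwiseStrictMono (f : κ → β) (g : κ → α) : Prop :=
  ∀ a b, f a = f b → a < b → g a < g b

variable [Fintype κ] {f : κ → β}

theorem FiberwiseStrictMono.unique {g g' : κ ≃ α} (hg : FiberwiseStrictMono f g)
    (hg' : FiberwiseStrictMono f g') (h : ∀ q, f (g.symm q) = f (g'.symm q)) : g = g' := by
  ext a
  let φ : {x // f x = f a} → {q // f (g.symm q) = f a} := fun x => ⟨g x, by simp [x.2]⟩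
  let φ' : {x // f x = f a} → {q // f (g.symm q) = f a} := fun x => ⟨g' x, by simp [h, x.2]⟩
  have hφ : StrictMono φ := fun x y hxy => hg x y (x.2.trans y.2.symm) hxy
  have hφ' : StrictMono φ' := fun x y hxy => hg' x y (x.2.trans y.2.symm) hxy
  have hrange : Set.range φ = Set.range φ' := by
    rw [Set.range_eq_univ.mpr, Set.range_eq_univ.mpr]
    · exact fun q => ⟨⟨g'.symm q, by rw [← h]; exact q.2⟩, by simp [φ']⟩
    · exact fun q => ⟨⟨g.symm q, q.2⟩, by simp [φ]⟩
  exact congrArg Subtype.val (congrFun ((hφ.range_inj hφ').mp hrange) ⟨a, rfl⟩)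

theorem Equiv.ofFiberEquiv_apply_of_eq {γ δ ε : Type*} {u : γ → ε} {v : δ → ε}
    (e : ∀ c, {a // u a = c} ≃ {b // v b = c}) {a : γ} {c : ε} (ha : u a = c) :
    Equiv.ofFiberEquiv e a = e c ⟨a, ha⟩ := by
  subst ha; rfl

variable [Fintype α] [DecidableEq β]

theorem exists_fiberwiseStrictMono (g₀ : κ ≃ α) :
    ∃ g : κ ≃ α, FiberwiseStrictMono f g ∧ ∀ q, f (g.symm q) = f (g₀.symm q) := by
  let h := f ∘ g₀.symm
  have hcard (b : β) : Fintype.card {x // f x = b} = Fintype.card {q // h q = b} :=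
    Fintype.card_congr (g₀.subtypeEquiv fun x => by simp [h])
  let iso (b : β) : {x // f x = b} ≃o {q // h q = b} :=
    (monoEquivOfFin _ (hcard b)).symm.trans (monoEquivOfFin _ rfl)
  let g : κ ≃ α := Equiv.ofFiberEquiv fun b => (iso b).toEquiv
  have hg (x : κ) : h (g x) = f x := Equiv.ofFiberEquiv_map _ x
  refine ⟨g, fun a b hab hlt => ?_, fun q => by simpa [h] using (hg (g.symm q)).symm⟩
  rw [Equiv.ofFiberEquiv_apply_of_eq _ rfl, Equiv.ofFiberEquiv_apply_of_eq _ hab.symm]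
  exact (iso (f a)).strictMono (Subtype.mk_lt_mk.mpr hlt)

theorem card_fiberwiseStrictMono_mul_prod [DecidableEq κ] [Fintype β]
    (hcard : Fintype.card κ = Fintype.card α) :
    Nat.card {g : κ ≃ α // FiberwiseStrictMono f g} *
        ∏ b, (Fintype.card {x // f x = b}).factorial =
      (Fintype.card κ).factorial := by
  -- every `T : κ ≃ α` is uniquely `s.trans g` with `g` fibrewise sorted and `s` preserving `f`
  let Φ : {g : κ ≃ α // FiberwiseStrictMono f g} × {s : Equiv.Perm κ // f ∘ s = f} →
      κ ≃ α := fun x => x.2.1.trans x.1.1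
  have hfs (s : {s : Equiv.Perm κ // f ∘ s = f}) (x : κ) : f (s.1 x) = f x :=
    congrFun s.2 x
  have hfs' (s : {s : Equiv.Perm κ // f ∘ s = f}) (x : κ) : f (s.1.symm x) = f x := by
    rw [← hfs s, Equiv.apply_symm_apply]
  have hΦ : Function.Bijective Φ := by
    constructor
    · rintro ⟨⟨g, hg⟩, s⟩ ⟨⟨g', hg'⟩, s'⟩ he
      have hgg : g = g' := hg.unique hg' fun q => by
        simpa [Φ, hfs'] using congrArg (fun T : κ ≃ α => f (T.symm q)) he
      subst hgg
      refine Prod.ext rfl (Subtype.ext (Equiv.ext fun x => g.injective ?_))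
      exact congrArg (fun T : κ ≃ α => T x) he
    · intro T
      obtain ⟨g, hg, hgT⟩ := exists_fiberwiseStrictMono (f := f) T
      refine ⟨⟨⟨g, hg⟩, ⟨T.trans g.symm, funext fun x => ?_⟩⟩,
        Equiv.ext fun x => by simp [Φ]⟩
      simpa using hgT (T x)
  have hstab : Nat.card {s : Equiv.Perm κ // f ∘ s = f} =
      ∏ b, (Fintype.card {x // f x = b}).factorial := by
    rw [Nat.card_eq_fintype_card]; exact DomMulAct.stabilizer_card f
  rw [← hstab, ← Nat.card_prod, Nat.card_eq_of_bijective Φ hΦ, Nat.card_eq_fintype_card,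
    Fintype.card_equiv (Fintype.equivOfCardEq hcard)]

end FiberwiseStrictMono

section Arrangement

variable {α : Type*} {m : ℕ}

theorem pair_infix_ofFn_symm_iff (p : α ≃ Fin m) {a b : α} :
    [a, b] <:+: List.ofFn p.symm ↔ (p a : ℕ) + 1 = p b := by
  rw [List.infix_iff_getElem?]
  constructor
  · rintro ⟨k, hk, hget⟩
    have h0 := hget 0 (by simp)
    have h1 := hget 1 (by simp)
    simp only [List.getElem?_ofFn, List.length_ofFn] at h0 h1 hk
    rw [dif_pos (by simp only [List.length_cons, List.length_nil] at hk; omega),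
      Option.some_inj, Equiv.symm_apply_eq] at h0 h1
    simp only [List.getElem_cons_zero, List.getElem_cons_succ] at h0 h1
    rw [← h0, ← h1]
    simp only
    omega
  · intro h
    refine ⟨p a, ?_, fun i hi => ?_⟩
    · have := (p b).isLt
      simp only [List.length_cons, List.length_nil, List.length_ofFn]
      omega
    simp only [List.getElem?_ofFn, List.length_cons, List.length_nil] at hi ⊢
    interval_cases i
    · simp
    · rw [dif_pos (by have := (p b).isLt; omega)]
      simp only [List.getElem_cons_succ, List.getElem_cons_zero, Option.some.injEq,
        Equiv.symm_apply_eq, Fin.ext_iff]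
      omega

theorem pairwise_ofFn_symm_iff [LinearOrder α] (p : α ≃ Fin m) {r : α → α → Prop}
    (hr : ∀ a b, r a b → r b a) :
    (List.ofFn p.symm).Pairwise (fun a b => r a b → a < b) ↔
      ∀ a b, r a b → a < b → p a < p b := by
  rw [List.pairwise_ofFn]
  constructor
  · intro h a b hab hlt
    by_contra hle
    have hba := h (lt_of_le_of_ne (not_lt.mp hle) (p.injective.ne hlt.ne'))
      (by simpa using hr a b hab)
    simp only [Equiv.symm_apply_apply] at hba
    exact hlt.not_gt hba
  · intro h i j hij hr'
    rcases lt_trichotomy (p.symm i) (p.symm j) with hlt | heq | hgt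
    · exact hlt
    · exact absurd (p.symm.injective heq) hij.ne
    · have := h _ _ (hr _ _ hr') hgt
      simp only [Equiv.apply_symm_apply] at this
      exact absurd this hij.not_gt

variable [Fintype α] [DecidableEq α]

theorem exists_ofFn_symm_eq {l : List α} (hl : l.Nodup) (hmem : ∀ a, a ∈ l)
    (hm : Fintype.card α = m) : ∃ p : α ≃ Fin m, List.ofFn p.symm = l := by
  have hlen : l.length = m := by
    rw [← hm, ← List.toFinset_card_of_nodup hl,
      Finset.eq_univ_of_forall fun a => List.mem_toFinset.mpr (hmem a), Finset.card_univ]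
  refine ⟨((finCongr hlen).symm.trans (hl.getEquivOfForallMemList l hmem)).symm, ?_⟩
  apply List.ext_getElem (by simp [hlen])
  intro i h₁ h₂
  simp

theorem card_equivFin_eq_card_list (hm : Fintype.card α = m) (P : List α → Prop) :
    Nat.card {p : α ≃ Fin m // P (List.ofFn p.symm)} =
      Nat.card {l : List α // (l.Nodup ∧ ∀ a, a ∈ l) ∧ P l} := by
  refine Nat.card_eq_of_bijective
    (fun p => ⟨List.ofFn p.1.symm, ⟨List.nodup_ofFn.mpr p.1.symm.injective,
      fun a => List.mem_ofFn.mpr ⟨p.1 a, by simp⟩⟩, p.2⟩)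
    ⟨fun p p' h => ?_, fun l => ?_⟩
  · have := List.ofFn_injective (congrArg Subtype.val h)
    exact Subtype.ext (Equiv.symm_bijective.injective (Equiv.coe_inj.mp this))
  · obtain ⟨p, hp⟩ := exists_ofFn_symm_eq l.2.1.1 l.2.1.2 hm
    exact ⟨⟨p, hp ▸ l.2.2⟩, Subtype.ext hp⟩

end Arrangement

section Glue

variable {α : Type*} (glue : α → Option α)

def IsGlued (b : α) : Prop := ∃ a, glue a = some b

def gluedWord (a : α) : List α := a :: (glue a).toList

instance [Fintype α] [DecidableEq α] : DecidablePred (IsGlued glue) :=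
  fun _ => Fintype.decidableExistsFintype

variable {glue}

theorem pair_infix_of_infix_cons {a b x : α} {l : List α} (h : [a, b] <:+: x :: l)
    (hx : a ≠ x) : [a, b] <:+: l := by
  rcases List.infix_cons_iff.mp h with h | h
  · exact absurd (List.cons_prefix_cons.mp h).1 hx
  · exact h

theorem not_isGlued_of_glue_eq_some (hchain : ∀ a b, glue a = some b → glue b = none)
    {a b : α} (h : glue a = some b) : ¬ IsGlued glue a := by
  rintro ⟨c, hc⟩
  simp [hchain c a hc] at h

theorem eq_flatMap_filter_not_isGlued [DecidablePred (IsGlued glue)]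
    (hchain : ∀ a b, glue a = some b → glue b = none) :
    ∀ l : List α, l.Nodup →
      (∀ a b, glue a = some b → a ∈ l ∨ b ∈ l → [a, b] <:+: l) →
        l = (l.filter fun a => ¬ IsGlued glue a).flatMap (gluedWord glue)
  | [], _, _ => rfl
  | a :: l, hnd, hinf => by
    -- a letter that `a` is glued behind would have to precede `a`, which comes first
    have ha : ¬ IsGlued glue a := by
      rintro ⟨c, hc⟩
      have hca : c ≠ a := by rintro rfl; simp [hchain c c hc] at hc
      exact (List.nodup_cons.mp hnd).1
        ((pair_infix_of_infix_cons (hinf c a hc (by simp)) hca).subset (by simp))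
    cases hga : glue a with
    | none =>
      have ih := eq_flatMap_filter_not_isGlued hchain l (List.nodup_cons.mp hnd).2
        fun c d hcd hmem =>
          pair_infix_of_infix_cons (hinf c d hcd (by simp only [List.mem_cons]; tauto))
            (by rintro rfl; simp [hga] at hcd)
      rw [List.filter_cons_of_pos (by simpa using ha), List.flatMap_cons, gluedWord, hga]
      simpa using ih
    | some b =>
      obtain ⟨l', rfl⟩ : ∃ l', l = b :: l' := by
        rcases List.infix_cons_iff.mp (hinf a b hga (by simp)) with h | h
        · obtain ⟨t, rfl⟩ := (List.cons_prefix_cons.mp h).2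
          exact ⟨t, rfl⟩
        · exact absurd (h.subset (by simp)) (List.nodup_cons.mp hnd).1
      simp only [List.nodup_cons, List.mem_cons, not_or] at hnd
      have ih := eq_flatMap_filter_not_isGlued hchain l' hnd.2.2 fun c d hcd hmem => by
        have hca : c ≠ a := by
          rintro rfl
          obtain rfl : d = b := Option.some_injective _ (hcd.symm.trans hga)
          tauto
        have hcb : c ≠ b := by rintro rfl; simp [hchain a c hga] at hcd
        exact pair_infix_of_infix_cons (pair_infix_of_infix_cons
          (hinf c d hcd (by simp only [List.mem_cons]; tauto)) hca) hcb
      rw [List.filter_cons_of_pos (by simpa using ha),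
        List.filter_cons_of_neg (by simpa using ⟨a, hga⟩), List.flatMap_cons, gluedWord, hga]
      simpa using ih
termination_by l => l.length

theorem filter_flatMap_gluedWord [DecidablePred (IsGlued glue)] {k : List α}
    (hk : ∀ a ∈ k, ¬ IsGlued glue a) :
    (k.flatMap (gluedWord glue)).filter (fun a => ¬ IsGlued glue a) = k := by
  induction k with
  | nil => rfl
  | cons a k ih =>
    rw [List.flatMap_cons, List.filter_append, ih fun b hb => hk b (by simp [hb])]
    cases hga : glue a with
    | none => simp [gluedWord, hga, hk a (by simp)]
    | some b => simp [gluedWord, hga, hk a (by simp), show IsGlued glue b from ⟨a, hga⟩]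

theorem mem_gluedWord {a x : α} : x ∈ gluedWord glue a ↔ x = a ∨ glue a = some x := by
  cases h : glue a <;> simp [gluedWord, h, eq_comm]

theorem nodup_flatMap_gluedWord (hinj : ∀ a a' b, glue a = some b → glue a' = some b → a = a')
    {k : List α} (hk : k.Nodup) (hkg : ∀ a ∈ k, ¬ IsGlued glue a) :
    (k.flatMap (gluedWord glue)).Nodup := by
  refine List.nodup_flatMap.mpr ⟨fun a ha => ?_, hk.imp_of_mem fun {a a'} ha ha' hne => ?_⟩
  · cases hga : glue a with
    | none => simp [gluedWord, hga]
    | some b =>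
      simp only [gluedWord, hga, Option.toList_some, List.nodup_cons, List.mem_singleton,
        List.not_mem_nil, not_false_eq_true, List.nodup_nil, and_true]
      rintro rfl
      exact hkg a ha ⟨a, hga⟩
  · simp only [Function.onFun, List.disjoint_left, mem_gluedWord]
    rintro x (rfl | hx) (rfl | hx')
    · exact hne rfl
    · exact hkg _ ha ⟨a', hx'⟩
    · exact hkg _ ha' ⟨a, hx⟩
    · exact hne (hinj a a' x hx hx')

theorem mem_flatMap_gluedWord (hchain : ∀ a b, glue a = some b → glue b = none) {k : List α}
    (hk : ∀ a, ¬ IsGlued glue a → a ∈ k) (b : α) : b ∈ k.flatMap (gluedWord glue) := by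
  rw [List.mem_flatMap]
  by_cases hb : IsGlued glue b
  · obtain ⟨a, ha⟩ := hb
    exact ⟨a, hk a (not_isGlued_of_glue_eq_some hchain ha), mem_gluedWord.mpr (Or.inr ha)⟩
  · exact ⟨b, hk b hb, mem_gluedWord.mpr (Or.inl rfl)⟩

theorem pairwise_flatMap_gluedWord {R : α → α → Prop} {k : List α} (hR : k.Pairwise R) :
    (k.flatMap (gluedWord glue)).Pairwise
      (fun x y => ¬ IsGlued glue x → ¬ IsGlued glue y → R x y) := by
  have head_of_not_isGlued {a x : α} (hx : x ∈ gluedWord glue a) (hxg : ¬ IsGlued glue x) :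
      x = a := (mem_gluedWord.mp hx).resolve_right fun h => hxg ⟨a, h⟩
  refine List.pairwise_flatMap.mpr ⟨fun a _ => ?_, hR.imp_of_mem fun {a a'} _ _ hR => ?_⟩
  · cases hga : glue a with
    | none => simp [gluedWord, hga]
    | some b => simpa [gluedWord, hga] using fun _ hb => absurd ⟨a, hga⟩ hb
  · intro x hx y hy hxg hyg
    rwa [head_of_not_isGlued hx hxg, head_of_not_isGlued hy hyg]

theorem gluedWord_infix_flatMap {k : List α} {a : α} (ha : a ∈ k) :
    gluedWord glue a <:+: k.flatMap (gluedWord glue) :=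
  List.infix_of_mem_flatten (List.mem_map_of_mem ha)

end Glue

namespace GluedBlocks

variable {ι : Type*}

/-- `small i` and `big i` stand for the values `i` and `n + i`. In this order every small letter
precedes every big one and the big ones are reversed, so that the units of each block form an
increasing chain. -/
abbrev Letter (ι : Type*) := ι ⊕ₗ ιᵒᵈ

def small (i : ι) : Letter ι := toLex (Sum.inl i)

def big (i : ι) : Letter ι := toLex (Sum.inr (OrderDual.toDual i))

def index (a : Letter ι) : ι := Sum.elim id OrderDual.ofDual (ofLex a)

@[simp] theorem index_small (i : ι) : index (small i) = i := rfl

@[simp] theorem index_big (i : ι) : index (big i) = i := rfl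

theorem letter_cases (a : Letter ι) : (∃ i, a = small i) ∨ ∃ i, a = big i := by
  rcases a with i | i
  · exact Or.inl ⟨i, rfl⟩
  · exact Or.inr ⟨OrderDual.ofDual i, rfl⟩

theorem small_injective : Function.Injective (small (ι := ι)) := fun _ _ h => by
  simpa [small] using h

theorem big_injective : Function.Injective (big (ι := ι)) := fun _ _ h => by
  simpa [big] using h

@[simp] theorem small_inj {i j : ι} : small i = small j ↔ i = j := small_injective.eq_iff

@[simp] theorem big_inj {i j : ι} : big i = big j ↔ i = j := big_injective.eq_iff

@[simp] theorem small_ne_big (i j : ι) : small i ≠ big j := by simp [small, big]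

@[simp] theorem big_ne_small (i j : ι) : big i ≠ small j := by simp [small, big]

variable [LinearOrder ι]

@[simp] theorem small_lt_small_iff {i j : ι} : small i < small j ↔ i < j :=
  Sum.Lex.inl_lt_inl_iff

@[simp] theorem small_lt_big (i j : ι) : small i < big j := Sum.Lex.inl_lt_inr _ _

@[simp] theorem not_big_lt_small (i j : ι) : ¬ big i < small j := Sum.Lex.not_inr_lt_inl

@[simp] theorem big_lt_big_iff {i j : ι} : big i < big j ↔ j < i := Sum.Lex.inr_lt_inr_iff

variable [Fintype ι] (P : Finpartition (Finset.univ : Finset ι))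

def IsBlockPred (x y : ι) : Prop :=
  ∃ B ∈ P.parts, x ∈ B ∧ y ∈ B ∧ x < y ∧ ∀ z ∈ B, ¬(x < z ∧ z < y)

variable {P}
theorem isBlockPred_iff {x y : ι} :
    IsBlockPred P x y ↔ x ∈ P.part y ∧ x < y ∧ ∀ z ∈ P.part y, ¬(x < z ∧ z < y) := by
  constructor
  · rintro ⟨B, hB, hx, hy, hxy, hbet⟩
    rw [P.part_eq_of_mem hB hy]
    exact ⟨hx, hxy, hbet⟩
  · rintro ⟨hx, hxy, hbet⟩
    exact ⟨P.part y, P.part_mem.mpr (Finset.mem_univ y), hx, P.mem_part (Finset.mem_univ y),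
      hxy, hbet⟩

theorem IsBlockPred.part_eq {x y : ι} (h : IsBlockPred P x y) : P.part x = P.part y := by
  obtain ⟨B, hB, hx, hy, -⟩ := h
  rw [P.part_eq_of_mem hB hx, P.part_eq_of_mem hB hy]

theorem IsBlockPred.lt {x y : ι} (h : IsBlockPred P x y) : x < y :=
  (isBlockPred_iff.mp h).2.1

theorem IsBlockPred.left_unique {x x' y : ι} (h : IsBlockPred P x y)
    (h' : IsBlockPred P x' y) : x = x' := by
  rw [isBlockPred_iff] at h h'
  by_contra hne
  rcases lt_or_gt_of_ne hne with hlt | hlt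
  · exact h.2.2 x' h'.1 ⟨hlt, h'.2.1⟩
  · exact h'.2.2 x h.1 ⟨hlt, h.2.1⟩

theorem IsBlockPred.right_unique {x y y' : ι} (h : IsBlockPred P x y)
    (h' : IsBlockPred P x y') : y = y' := by
  have hpart : P.part y = P.part y' := h.part_eq.symm.trans h'.part_eq
  have hy : y ∈ P.part y' := hpart ▸ P.mem_part (Finset.mem_univ y)
  have hy' : y' ∈ P.part y := hpart ▸ P.mem_part (Finset.mem_univ y')
  rw [isBlockPred_iff] at h h'
  by_contra hne
  rcases lt_or_gt_of_ne hne with hlt | hlt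
  · exact h'.2.2 y hy ⟨h.2.1, hlt⟩
  · exact h.2.2 y' hy' ⟨h'.2.1, hlt⟩

theorem exists_isBlockPred_left {x y : ι} (hx : x ∈ P.part y) (hxy : x < y) :
    ∃ x', IsBlockPred P x' y ∧ x ≤ x' := by
  let S := (P.part y).filter (· < y)
  have hS : S.Nonempty := ⟨x, Finset.mem_filter.mpr ⟨hx, hxy⟩⟩
  obtain ⟨hmem, hlt⟩ := Finset.mem_filter.mp (S.max'_mem hS)
  refine ⟨S.max' hS, isBlockPred_iff.mpr ⟨hmem, hlt, fun z hz ⟨hz₁, hz₂⟩ => ?_⟩,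
    S.le_max' x (Finset.mem_filter.mpr ⟨hx, hxy⟩)⟩
  exact hz₁.not_ge (S.le_max' z (Finset.mem_filter.mpr ⟨hz, hz₂⟩))

theorem exists_isBlockPred_right {x y : ι} (hy : y ∈ P.part x) (hxy : x < y) :
    ∃ y', IsBlockPred P x y' := by
  let S := (P.part x).filter (x < ·)
  have hS : S.Nonempty := ⟨y, Finset.mem_filter.mpr ⟨hy, hxy⟩⟩
  obtain ⟨hmem, hlt⟩ := Finset.mem_filter.mp (S.min'_mem hS)
  refine ⟨S.min' hS, ⟨P.part x, P.part_mem.mpr (Finset.mem_univ x),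
    P.mem_part (Finset.mem_univ x), hmem, hlt, fun z hz ⟨hz₁, hz₂⟩ => ?_⟩⟩
  exact hz₂.not_ge (S.min'_le z (Finset.mem_filter.mpr ⟨hz, hz₁⟩))

variable (P) in
noncomputable def blockPred (y : ι) : Option ι :=
  open Classical in if h : ∃ x, IsBlockPred P x y then some h.choose else none

theorem blockPred_eq_some {x y : ι} : blockPred P y = some x ↔ IsBlockPred P x y := by
  unfold blockPred
  split_ifs with h
  · exact ⟨fun hx => Option.some_injective _ hx ▸ h.choose_spec,
      fun hx => congrArg some (h.choose_spec.left_unique hx)⟩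
  · exact ⟨fun hx => absurd hx (by simp), fun hx => absurd ⟨x, hx⟩ h⟩

variable (P) in
noncomputable def glue (a : Letter ι) : Option (Letter ι) :=
  Sum.elim (fun _ => none) (fun y => (blockPred P (OrderDual.ofDual y)).map small) (ofLex a)

@[simp] theorem glue_small (i : ι) : glue P (small i) = none := rfl

theorem glue_big (i : ι) : glue P (big i) = (blockPred P i).map small := rfl

theorem glue_eq_some {a b : Letter ι} :
    glue P a = some b ↔ ∃ x y, a = big y ∧ b = small x ∧ IsBlockPred P x y := by
  rcases letter_cases a with ⟨i, rfl⟩ | ⟨y, rfl⟩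
  · simp
  · rw [glue_big, Option.map_eq_some_iff]
    simp only [blockPred_eq_some, big_inj]
    constructor
    · rintro ⟨x, hx, rfl⟩; exact ⟨x, y, rfl, rfl, hx⟩
    · rintro ⟨x, y', rfl, rfl, hx⟩; exact ⟨x, hx, rfl⟩

theorem glue_big_of_isBlockPred {x y : ι} (h : IsBlockPred P x y) :
    glue P (big y) = some (small x) :=
  glue_eq_some.mpr ⟨x, y, rfl, rfl, h⟩

theorem glue_injective {a a' b : Letter ι} (h : glue P a = some b) (h' : glue P a' = some b) :
    a = a' := by
  obtain ⟨x, y, rfl, rfl, hxy⟩ := glue_eq_some.mp h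
  obtain ⟨x', y', rfl, hx, hxy'⟩ := glue_eq_some.mp h'
  obtain rfl : x = x' := small_inj.mp hx
  rw [hxy.right_unique hxy']

theorem glue_glue {a b : Letter ι} (h : glue P a = some b) : glue P b = none := by
  obtain ⟨x, y, rfl, rfl, -⟩ := glue_eq_some.mp h
  rfl

theorem not_isGlued_big (y : ι) : ¬ IsGlued (glue P) (big y) := by
  rintro ⟨a, ha⟩
  obtain ⟨x, y, -, h, -⟩ := glue_eq_some.mp ha
  exact big_ne_small _ _ h

theorem not_isGlued_small_iff {x : ι} :
    ¬ IsGlued (glue P) (small x) ↔ ∀ z ∈ P.part x, z ≤ x := by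
  constructor
  · intro h z hz
    by_contra hlt
    obtain ⟨y, hy⟩ := exists_isBlockPred_right hz (not_le.mp hlt)
    exact h ⟨big y, glue_big_of_isBlockPred hy⟩
  · rintro h ⟨a, ha⟩
    obtain ⟨x', y, -, hx, hxy⟩ := glue_eq_some.mp ha
    obtain rfl : x = x' := small_inj.mp hx
    exact hxy.lt.not_ge (h y (hxy.part_eq ▸ P.mem_part (Finset.mem_univ y)))

variable (P) in
def blockOf (a : Letter ι) : Finset ι := P.part (index a)

variable (P) in
/-- `p a` is the position of the letter `a`, i.e. `p` plays the role of `σ⁻¹`. -/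
def Admissible {m : ℕ} (p : Letter ι ≃ Fin m) : Prop :=
  (∀ i, p (small i) < p (big i)) ∧
    ∀ x y, IsBlockPred P x y → (p (big y) : ℕ) + 1 = p (small x)

section Admissible

variable {m : ℕ} {p : Letter ι ≃ Fin m}

theorem Admissible.big_lt_big (hp : Admissible P p) {y y' : ι} (hlt : y' < y)
    (hy' : y' ∈ P.part y) : p (big y) < p (big y') := by
  induction y using WellFoundedLT.induction with
  | _ y ih =>
    obtain ⟨x, hxy, hle⟩ := exists_isBlockPred_left hy' hlt
    have hglue := hp.2 x y hxy
    have hx := hp.1 x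
    rcases hle.eq_or_lt with rfl | hlt'
    · rw [Fin.lt_def] at hx ⊢; omega
    · have := ih x hxy.lt hlt' (hxy.part_eq ▸ hy')
      rw [Fin.lt_def] at hx this ⊢; omega

theorem Admissible.lt_of_not_isGlued (hp : Admissible P p) {a b : Letter ι}
    (ha : ¬ IsGlued (glue P) a) (hb : ¬ IsGlued (glue P) b) (hab : blockOf P a = blockOf P b)
    (hlt : a < b) : p a < p b := by
  rcases letter_cases a with ⟨x, rfl⟩ | ⟨y, rfl⟩ <;>
    rcases letter_cases b with ⟨x', rfl⟩ | ⟨y', rfl⟩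
  · have hab : P.part x = P.part x' := hab
    have hx' : x' ∈ P.part x := hab ▸ P.mem_part (Finset.mem_univ x')
    exact absurd (not_isGlued_small_iff.mp ha x' hx') (not_le.mpr (small_lt_small_iff.mp hlt))
  · have hab : P.part x = P.part y' := hab
    have hy' : y' ∈ P.part x := hab ▸ P.mem_part (Finset.mem_univ y')
    rcases (not_isGlued_small_iff.mp ha y' hy').eq_or_lt with rfl | hlt'
    · exact hp.1 y'
    · exact (hp.1 x).trans (hp.big_lt_big hlt' hy')
  · exact absurd hlt (not_big_lt_small _ _)
  · have hab : P.part y = P.part y' := hab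
    exact hp.big_lt_big (big_lt_big_iff.mp hlt) (hab ▸ P.mem_part (Finset.mem_univ y'))

theorem admissible_of_chain_order
    (hchain : ∀ a b, ¬ IsGlued (glue P) a → ¬ IsGlued (glue P) b →
      blockOf P a = blockOf P b → a < b → p a < p b)
    (hglue : ∀ x y, IsBlockPred P x y → (p (big y) : ℕ) + 1 = p (small x)) :
    Admissible P p := by
  refine ⟨fun i => ?_, hglue⟩
  by_cases hi : IsGlued (glue P) (small i)
  · obtain ⟨a, ha⟩ := hi
    obtain ⟨x, y, rfl, hx, hxy⟩ := glue_eq_some.mp ha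
    obtain rfl : x = i := (small_inj.mp hx).symm
    have hlt := hchain _ _ (not_isGlued_big y) (not_isGlued_big x) hxy.part_eq.symm
      (big_lt_big_iff.mpr hxy.lt)
    have := hglue x y hxy
    have hne := Fin.val_ne_of_ne (p.injective.ne (small_ne_big x x))
    rw [Fin.lt_def] at hlt ⊢
    omega
  · exact hchain _ _ hi (not_isGlued_big i) rfl (small_lt_big i i)

end Admissible

variable (P) in
def AdmissibleList (l : List (Letter ι)) : Prop :=
  l.Pairwise (fun a b => index a = index b → a < b) ∧
    ∀ a b, glue P a = some b → [a, b] <:+: l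

theorem admissible_iff_admissibleList {m : ℕ} (p : Letter ι ≃ Fin m) :
    Admissible P p ↔ AdmissibleList P (List.ofFn p.symm) := by
  rw [AdmissibleList, pairwise_ofFn_symm_iff p fun _ _ h => h.symm]
  simp only [pair_infix_ofFn_symm_iff, glue_eq_some]
  refine and_congr ⟨fun h a b hab hlt => ?_, fun h i => h _ _ rfl (small_lt_big i i)⟩
    ⟨fun h a b ⟨x, y, ha, hb, hxy⟩ => ha ▸ hb ▸ h x y hxy,
      fun h x y hxy => h _ _ ⟨x, y, rfl, rfl, hxy⟩⟩
  rcases letter_cases a with ⟨x, rfl⟩ | ⟨y, rfl⟩ <;>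
    rcases letter_cases b with ⟨x', rfl⟩ | ⟨y', rfl⟩ <;>
    simp only [index_small, index_big] at hab <;> subst hab <;>
    simp only [lt_self_iff_false, small_lt_big, not_big_lt_small] at hlt
  exact h x

variable (P) in
abbrev UnitHead := {a : Letter ι // ¬ IsGlued (glue P) a}

variable (P) in
noncomputable def expand (k : List (UnitHead P)) : List (Letter ι) :=
  (k.map Subtype.val).flatMap (gluedWord (glue P))

variable (P) in
def ChainSorted (k : List (UnitHead P)) : Prop :=
  k.Pairwise fun a b => blockOf P a.1 = blockOf P b.1 → a < b

theorem admissibleList_expand {k : List (UnitHead P)} (hk : k.Nodup) (hfull : ∀ a, a ∈ k)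
    (hsort : ChainSorted P k) :
    ((expand P k).Nodup ∧ ∀ a, a ∈ expand P k) ∧ AdmissibleList P (expand P k) := by
  unfold expand
  have hkg : ∀ a ∈ k.map Subtype.val, ¬ IsGlued (glue P) a := by
    simp only [List.mem_map]
    rintro _ ⟨a, -, rfl⟩
    exact a.2
  have hkmem (a : Letter ι) (ha : ¬ IsGlued (glue P) a) : a ∈ k.map Subtype.val :=
    List.mem_map_of_mem (f := Subtype.val) (hfull ⟨a, ha⟩)
  have hnd := nodup_flatMap_gluedWord (glue := glue P) (fun _ _ _ => glue_injective)
    (hk.map Subtype.val_injective) hkg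
  have hmem := mem_flatMap_gluedWord (glue := glue P) (fun _ _ => glue_glue) hkmem
  refine ⟨⟨hnd, hmem⟩, ?_⟩
  obtain ⟨p, hp⟩ := exists_ofFn_symm_eq hnd hmem rfl
  rw [← hp, ← admissible_iff_admissibleList]
  refine admissible_of_chain_order (fun a b ha hb hab hlt => ?_) fun x y hxy => ?_
  · have hpair := pairwise_flatMap_gluedWord (glue := glue P)
      ((List.pairwise_map (R := fun a b => blockOf P a = blockOf P b → a < b)).mpr hsort)
    rw [← hp] at hpair
    have hpos := (pairwise_ofFn_symm_iff p (r := fun a b => ¬ IsGlued (glue P) a ∧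
      ¬ IsGlued (glue P) b ∧ blockOf P a = blockOf P b)
      fun a b h => ⟨h.2.1, h.1, h.2.2.symm⟩).mp (hpair.imp fun h hr => h hr.1 hr.2.1 hr.2.2)
    exact hpos a b ⟨ha, hb, hab⟩ hlt
  · rw [← pair_infix_ofFn_symm_iff, hp]
    have := gluedWord_infix_flatMap (glue := glue P) (hkmem _ (not_isGlued_big y))
    rwa [gluedWord, glue_big_of_isBlockPred hxy] at this

theorem expand_injective : Function.Injective (expand P) := by
  intro k k' h
  have hval (k : List (UnitHead P)) :
      (expand P k).filter (fun a => ¬ IsGlued (glue P) a) = k.map Subtype.val :=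
    filter_flatMap_gluedWord fun a ha => by
      obtain ⟨a, -, rfl⟩ := List.mem_map.mp ha
      exact a.2
  exact List.map_injective_iff.mpr Subtype.val_injective ((hval k).symm.trans (h ▸ hval k'))

theorem exists_expand_eq {l : List (Letter ι)} (hl : l.Nodup) (hfull : ∀ a, a ∈ l)
    (hadm : AdmissibleList P l) :
    ∃ k : List (UnitHead P), ((k.Nodup ∧ ∀ a, a ∈ k) ∧ ChainSorted P k) ∧ expand P k = l := by
  obtain ⟨p, rfl⟩ := exists_ofFn_symm_eq hl hfull rfl
  have hp := (admissible_iff_admissibleList p).mpr hadm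
  obtain ⟨k, hk⟩ := CanLift.prf (β := List (UnitHead P))
    ((List.ofFn p.symm).filter fun a => ¬ IsGlued (glue P) a) fun a ha => by
      simpa using (List.mem_filter.mp ha).2
  have hsorted : (List.ofFn p.symm).Pairwise fun a b => ¬ IsGlued (glue P) a ∧
      ¬ IsGlued (glue P) b ∧ blockOf P a = blockOf P b → a < b :=
    (pairwise_ofFn_symm_iff p fun a b h => ⟨h.2.1, h.1, h.2.2.symm⟩).mpr
      fun a b h hlt => hp.lt_of_not_isGlued h.1 h.2.1 h.2.2 hlt
  refine ⟨k, ⟨⟨List.Nodup.of_map Subtype.val (hk ▸ hl.filter _), fun a => ?_⟩, ?_⟩, ?_⟩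
  · have : a.1 ∈ k.map Subtype.val :=
      hk ▸ List.mem_filter.mpr ⟨hfull a.1, by simpa using a.2⟩
    obtain ⟨b, hb, hba⟩ := List.mem_map.mp this
    exact Subtype.ext hba ▸ hb
  · have := hk ▸ hsorted.filter (fun a => decide ¬ IsGlued (glue P) a)
    exact (List.pairwise_map.mp this).imp fun {a b} h hab => h ⟨a.2, b.2, hab⟩
  · rw [expand, hk]
    exact (eq_flatMap_filter_not_isGlued (glue := glue P) (fun _ _ => glue_glue) _ hl
      fun a b hab _ => hadm.2 a b hab).symm

theorem card_admissibleList_eq_card_chainSorted :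
    Nat.card {l : List (Letter ι) // (l.Nodup ∧ ∀ a, a ∈ l) ∧ AdmissibleList P l} =
      Nat.card {k : List (UnitHead P) // (k.Nodup ∧ ∀ a, a ∈ k) ∧ ChainSorted P k} := by
  refine (Nat.card_eq_of_bijective
    (fun k => ⟨expand P k.1, admissibleList_expand k.2.1.1 k.2.1.2 k.2.2⟩)
    ⟨fun k k' h => Subtype.ext (expand_injective (congrArg Subtype.val h)), fun l => ?_⟩).symm
  obtain ⟨k, hk, hkl⟩ := exists_expand_eq l.2.1.1 l.2.1.2 l.2.2
  exact ⟨⟨k, hk⟩, Subtype.ext hkl⟩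

theorem card_unitHead_fiber {B : Finset ι} (hB : B ∈ P.parts) :
    Fintype.card {a : UnitHead P // blockOf P a.1 = B} = B.card + 1 := by
  rw [Fintype.card_congr (Equiv.subtypeSubtypeEquivSubtypeInter (fun a => ¬ IsGlued (glue P) a)
    (fun a => blockOf P a = B)), Fintype.card_subtype]
  have hne := P.nonempty_of_mem_parts hB
  have hpart {i : ι} : P.part i = B ↔ i ∈ B :=
    ⟨fun h => h ▸ P.mem_part (Finset.mem_univ i), P.part_eq_of_mem hB⟩
  have hfilter : Finset.univ.filter (fun a => ¬ IsGlued (glue P) a ∧ blockOf P a = B) =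
      insert (small (B.max' hne)) (B.map ⟨big, big_injective⟩) := by
    ext a
    rcases letter_cases a with ⟨x, rfl⟩ | ⟨y, rfl⟩
    · simp only [Finset.mem_filter, Finset.mem_univ, true_and, Finset.mem_insert, small_inj,
        Finset.mem_map, Function.Embedding.coeFn_mk, big_ne_small, and_false, exists_false,
        or_false, not_isGlued_small_iff, blockOf, index_small, hpart]
      constructor
      · rintro ⟨htop, hx⟩
        exact le_antisymm (B.le_max' x hx)
          (B.max'_le hne x fun z hz => htop z (P.part_eq_of_mem hB hx ▸ hz))
      · rintro rfl
        have hx := B.max'_mem hne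
        exact ⟨fun z hz => B.le_max' z (P.part_eq_of_mem hB hx ▸ hz), hx⟩
    · simp [not_isGlued_big, blockOf, hpart]
  rw [hfilter, Finset.card_insert_of_notMem (by simp), Finset.card_map]

theorem card_unitHead_fiber_of_notMem {B : Finset ι} (hB : B ∉ P.parts) :
    Fintype.card {a : UnitHead P // blockOf P a.1 = B} = 0 :=
  Fintype.card_eq_zero_iff.mpr ⟨fun a => hB (a.2 ▸ P.part_mem.mpr (Finset.mem_univ _))⟩

theorem prod_card_unitHead_fiber :
    ∏ B, (Fintype.card {a : UnitHead P // blockOf P a.1 = B}).factorial =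
      ∏ B ∈ P.parts, (B.card + 1).factorial := by
  rw [← Finset.prod_subset (Finset.subset_univ P.parts) fun B _ hB => by
    rw [card_unitHead_fiber_of_notMem hB, Nat.factorial_zero]]
  exact Finset.prod_congr rfl fun B hB => by rw [card_unitHead_fiber hB]

theorem card_unitHead : Fintype.card (UnitHead P) = Fintype.card ι + P.parts.card := by
  rw [← Finset.card_univ, Finset.card_eq_sum_card_fiberwise (t := P.parts)
      (f := fun a : UnitHead P => blockOf P a.1) fun a _ => P.part_mem.mpr (Finset.mem_univ _),
    Finset.sum_congr rfl fun B hB => (Fintype.card_subtype _).symm.trans (card_unitHead_fiber hB),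
    Finset.sum_add_distrib, P.sum_card_parts, Finset.card_univ, Finset.sum_const, smul_eq_mul,
    mul_one]

theorem card_admissible_mul_prod {N : ℕ} (hN : Fintype.card (Letter ι) = N) :
    Nat.card {p : Letter ι ≃ Fin N // Admissible P p} *
        ∏ B ∈ P.parts, (B.card + 1).factorial =
      (Fintype.card ι + P.parts.card).factorial := by
  have hcard : Nat.card {p : Letter ι ≃ Fin N // Admissible P p} =
      Nat.card {q : UnitHead P ≃ Fin (Fintype.card (UnitHead P)) //
        FiberwiseStrictMono (fun a => blockOf P a.1) q} := by
    rw [Nat.card_congr (Equiv.subtypeEquivRight admissible_iff_admissibleList),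
      card_equivFin_eq_card_list hN, card_admissibleList_eq_card_chainSorted,
      ← card_equivFin_eq_card_list rfl]
    exact Nat.card_congr <| Equiv.subtypeEquivRight fun q =>
      pairwise_ofFn_symm_iff q fun _ _ h => h.symm
  rw [hcard, ← prod_card_unitHead_fiber, card_fiberwiseStrictMono_mul_prod (by simp), card_unitHead]

def letterEquivFin (n : ℕ) : Letter (Fin n) ≃ Fin (n + n) :=
  ofLex.trans ((Equiv.sumCongr (Equiv.refl _) OrderDual.ofDual).trans finSumFinEquiv)

theorem admissible_letterEquivFin_trans_iff {n : ℕ}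
    (P : Finpartition (Finset.univ : Finset (Fin n))) (σ : Equiv.Perm (Fin (n + n))) :
    Admissible P ((letterEquivFin n).trans σ.symm) ↔
      StripConstraints n n (fun _ => true) σ ∧
        ∀ B ∈ P.parts, ∀ x ∈ B, ∀ y ∈ B, x < y → (∀ z ∈ B, ¬(x < z ∧ z < y)) →
          (σ.symm (Fin.natAdd n y)).val + 1 = (σ.symm (Fin.castAdd n x)).val :=
  and_congr
    (forall_congr' fun _ => ⟨fun h => ⟨fun _ => h, fun h' => by cases h'⟩, fun h => h.1 rfl⟩)
    ⟨fun h B hB x hx y hy hxy hbet => h x y ⟨B, hB, hx, hy, hxy, hbet⟩,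
      fun h x y ⟨B, hB, hx, hy, hxy, hbet⟩ => h B hB x hx y hy hxy hbet⟩

end GluedBlocks

open GluedBlocks in
theorem stmt18 (n : ℕ) (P : Finpartition (Finset.univ : Finset (Fin n))) :
    Nat.card {σ : Equiv.Perm (Fin (n + n)) //
        StripConstraints n n (fun _ => true) σ ∧
        ∀ B ∈ P.parts, ∀ x ∈ B, ∀ y ∈ B, x < y →
          (∀ z ∈ B, ¬(x < z ∧ z < y)) →
          (σ.symm ⟨n + y.val, by have := y.isLt; omega⟩).val + 1
            = (σ.symm ⟨x.val, by have := x.isLt; omega⟩).val}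
      * ∏ B ∈ P.parts, (B.card + 1).factorial
      = (n + P.parts.card).factorial := by
  convert card_admissible_mul_prod (P := P) (N := n + n) (by simp) using 2
  · exact Nat.card_congr <| ((Equiv.symmEquiv _ _).trans
      ((letterEquivFin n).symm.equivCongr (Equiv.refl _))).subtypeEquiv
        fun σ => (admissible_letterEquivFin_trans_iff P σ).symm
  · simp
end
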